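/- arXiv:1210.3536 — 8 statements merged into one kernel-verified Lean document; each statement's English description precedes it below -/
import Mathlib

section
/- Every 2-dimensional subspace N of ℝ⁴ that is totally null with respect to B is equal to N₊(φ) for some φ ∈ [0, 2π) or to N₋(φ) for some φ ∈ [0, 2π). -/
/-- The standard split signature bilinear form on ℝ⁴ = ℝ^(2,2). -/
def B (y z : Fin 4 → ℝ) : ℝ := y 0 * z 0 + y 1 * z 1 - y 2 * z 2 - y 3 * z 3

/-- A subspace of ℝ⁴ is totally null w.r.t. `B` if `B` vanishes identically on it. -/
def TotallyNull (N : Submodule ℝ (Fin 4 → ℝ)) : Prop :=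
  ∀ v ∈ N, ∀ w ∈ N, B v w = 0

/-- The selfdual totally null plane `N₊(φ)`. -/
noncomputable def Nplus (φ : ℝ) : Submodule ℝ (Fin 4 → ℝ) :=
  Submodule.span ℝ {![1, 0, Real.cos φ, Real.sin φ], ![0, 1, Real.sin φ, -Real.cos φ]}

/-- The antiselfdual totally null plane `N₋(φ)`. -/
noncomputable def Nminus (φ : ℝ) : Submodule ℝ (Fin 4 → ℝ) :=
  Submodule.span ℝ {![1, 0, Real.cos φ, Real.sin φ], ![0, 1, -Real.sin φ, Real.cos φ]}

/-!
On a totally null vector `v` the form gives `v₀² + v₁² = v₂² + v₃²`, so `v` vanishes as soon as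
its first two coordinates do. Hence a totally null plane `N` projects isomorphically onto the
first two coordinates and is spanned by `u = (1, 0, a, b)` and `w = (0, 1, c, d)`. Nullity of
`u`, `w` and `B u w = 0` say that `(a, b)` and `(c, d)` are orthonormal in `ℝ²`, so
`(a, b) = (cos φ, sin φ)` and `(c, d) = ±(sin φ, -cos φ)`: the sign decides between `N₊(φ)`
and `N₋(φ)`.
-/

open Real Set Module

lemma exists_mem_Ico_cos_sin_eq {x y : ℝ} (h : x ^ 2 + y ^ 2 = 1) :
    ∃ φ ∈ Ico 0 (2 * π), cos φ = x ∧ sin φ = y := by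
  obtain ⟨θ, hθ⟩ := (Complex.norm_eq_one_iff ⟨x, y⟩).1 <| by
    rw [Complex.norm_def, Complex.normSq_mk, ← sq, ← sq, h, sqrt_one]
  have hcos : cos θ = x := by simpa using congrArg Complex.re hθ
  have hsin : sin θ = y := by simpa using congrArg Complex.im hθ
  refine ⟨toIcoMod two_pi_pos 0 θ, toIcoMod_mem_Ico' _ _, ?_, ?_⟩ <;>
    rw [← self_sub_toIcoDiv_zsmul, zsmul_eq_mul]
  · rwa [cos_sub_int_mul_two_pi]
  · rwa [sin_sub_int_mul_two_pi]

/-- Lagrange's identity gives `(a d - b c)² = 1`, and the sign of `a d - b c` selects the case. -/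
lemma eq_and_eq_neg_or_of_orthonormal {a b c d : ℝ} (hab : a ^ 2 + b ^ 2 = 1)
    (hcd : c ^ 2 + d ^ 2 = 1) (h : a * c + b * d = 0) :
    (c = b ∧ d = -a) ∨ (c = -b ∧ d = a) := by
  have hdet : (a * d - b * c) ^ 2 = 1 := by
    linear_combination (c ^ 2 + d ^ 2) * hab + hcd - (a * c + b * d) * h
  rcases sq_eq_one_iff.mp hdet with hdet | hdet
  · right
    exact ⟨by linear_combination -c * hab + a * h - b * hdet,
      by linear_combination -d * hab + b * h + a * hdet⟩
  · left
    exact ⟨by linear_combination -c * hab + a * h - b * hdet,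
      by linear_combination -d * hab + b * h + a * hdet⟩

lemma eq_zero_of_B_self_eq_zero {v : Fin 4 → ℝ} (hv : B v v = 0) (h0 : v 0 = 0) (h1 : v 1 = 0) :
    v = 0 := by
  simp only [B, h0, h1, mul_zero, zero_add, zero_sub] at hv
  have h2 : v 2 = 0 := by nlinarith
  have h3 : v 3 = 0 := by nlinarith
  ext i; fin_cases i <;> simp [h0, h1, h2, h3]

namespace TotallyNull

variable {N : Submodule ℝ (Fin 4 → ℝ)}

lemma exists_mem_coord_eq (hN : TotallyNull N) (hdim : finrank ℝ N = 2) :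
    ∃ u ∈ N, ∃ w ∈ N, u 0 = 1 ∧ u 1 = 0 ∧ w 0 = 0 ∧ w 1 = 1 := by
  let p : N →ₗ[ℝ] Fin 2 → ℝ := (LinearMap.funLeft ℝ ℝ ![0, 1]).comp N.subtype
  have hinj : Function.Injective p := by
    rw [← LinearMap.ker_eq_bot, Submodule.eq_bot_iff]
    rintro ⟨v, hv⟩ hpv
    have h0 : v 0 = 0 := congrFun hpv 0
    have h1 : v 1 = 0 := congrFun hpv 1
    exact Subtype.ext (eq_zero_of_B_self_eq_zero (hN v hv v hv) h0 h1)
  have hsurj : Function.Surjective p :=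
    (LinearMap.injective_iff_surjective_of_finrank_eq_finrank
      (by rw [hdim, finrank_fin_fun])).mp hinj
  obtain ⟨⟨u, hu⟩, hpu⟩ := hsurj ![1, 0]
  obtain ⟨⟨w, hw⟩, hpw⟩ := hsurj ![0, 1]
  exact ⟨u, hu, w, hw, congrFun hpu 0, congrFun hpu 1, congrFun hpw 0, congrFun hpw 1⟩

lemma eq_span_pair (hN : TotallyNull N) {u w : Fin 4 → ℝ} (hu : u ∈ N) (hw : w ∈ N)
    (hu0 : u 0 = 1) (hu1 : u 1 = 0) (hw0 : w 0 = 0) (hw1 : w 1 = 1) :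
    N = Submodule.span ℝ {u, w} := by
  refine le_antisymm (fun v hv ↦ ?_) (Submodule.span_le.mpr (Set.insert_subset hu (by simpa)))
  have hr : v - v 0 • u - v 1 • w ∈ N :=
    N.sub_mem (N.sub_mem hv (N.smul_mem _ hu)) (N.smul_mem _ hw)
  have hr0 : v - v 0 • u - v 1 • w = 0 :=
    eq_zero_of_B_self_eq_zero (hN _ hr _ hr) (by simp [hu0, hw0]) (by simp [hu1, hw1])
  rw [sub_sub, sub_eq_zero] at hr0
  rw [hr0, Submodule.mem_span_pair]
  exact ⟨_, _, rfl⟩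

end TotallyNull

theorem stmt_2 (N : Submodule ℝ (Fin 4 → ℝ))
    (hdim : Module.finrank ℝ N = 2) (hnull : TotallyNull N) :
    (∃ φ ∈ Set.Ico (0 : ℝ) (2 * Real.pi), N = Nplus φ) ∨
    (∃ φ ∈ Set.Ico (0 : ℝ) (2 * Real.pi), N = Nminus φ) := by
  obtain ⟨u, hu, w, hw, hu0, hu1, hw0, hw1⟩ := hnull.exists_mem_coord_eq hdim
  rw [hnull.eq_span_pair hu hw hu0 hu1 hw0 hw1]
  have huu := hnull u hu u hu
  have hww := hnull w hw w hw
  have huw := hnull u hu w hw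
  simp only [B, hu0, hu1, hw0, hw1] at huu hww huw
  obtain ⟨φ, hφ, hcos, hsin⟩ := exists_mem_Ico_cos_sin_eq (x := u 2) (y := u 3) (by linarith)
  have hu_eq : u = ![1, 0, cos φ, sin φ] := by ext i; fin_cases i <;> simp [hu0, hu1, hcos, hsin]
  rcases eq_and_eq_neg_or_of_orthonormal (a := u 2) (b := u 3) (c := w 2) (d := w 3)
    (by linarith) (by linarith) (by linarith) with ⟨hw2, hw3⟩ | ⟨hw2, hw3⟩
  · refine Or.inl ⟨φ, hφ, ?_⟩
    have hw_eq : w = ![0, 1, sin φ, -cos φ] := by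
      ext i; fin_cases i <;> simp [hw0, hw1, hw2, hw3, hcos, hsin]
    rw [Nplus, hu_eq, hw_eq]
  · refine Or.inr ⟨φ, hφ, ?_⟩
    have hw_eq : w = ![0, 1, -sin φ, cos φ] := by
      ext i; fin_cases i <;> simp [hw0, hw1, hw2, hw3, hcos, hsin]
    rw [Nminus, hu_eq, hw_eq]
end

section
/- Let n₁, n₂ ∈ ℝ⁴ be vectors spanning a 2-dimensional subspace of ℝ⁴ that is totally null with respect to B, and set p_{ij} = n₁ᵢ n₂ⱼ − n₁ⱼ n₂ᵢ for 1 ≤ i < j ≤ 4 (the Plücker coordinates of the bivector n₁ ∧ n₂). Then exactly one of the following two alternatives holds: either p₁₂ = p₃₄, p₁₃ = p₂₄ and p₁₄ = −p₂₃ (the selfdual case), or p₁₂ = −p₃₄, p₁₃ = −p₂₄ and p₁₄ = p₂₃ (the antiselfdual case). In other words, the bivector associated with a totally null 2-plane is an eigenvector of the Hodge star operator. -/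
/-- The Plücker coordinates of the bivector `n₁ ∧ n₂`. -/
def pluecker (n₁ n₂ : Fin 4 → ℝ) (i j : Fin 4) : ℝ := n₁ i * n₂ j - n₁ j * n₂ i

/-!
Write `p = n₁ ∧ n₂` as `p = p⁺ + p⁻` with `p⁺` selfdual and `p⁻` antiselfdual. Each of the
nine products `p⁻ᵢ * p⁺ⱼ` is a polynomial combination of `B n₁ n₁`, `B n₁ n₂` and `B n₂ n₂`,
so on a totally null plane `p⁻ = 0` or `p⁺ = 0`. Both cannot vanish, since then `p = 0` and
`n₁`, `n₂` would be linearly dependent.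
-/

open Module Submodule

theorem finrank_span_pair_le_one_of_mul_eq_mul {K ι : Type*} [Field K] {x y : ι → K}
    (h : ∀ i j, x i * y j = x j * y i) : finrank K (span K {x, y}) ≤ 1 := by
  obtain ⟨z, hxz, hyz⟩ : ∃ z, x ∈ K ∙ z ∧ y ∈ K ∙ z := by
    rcases eq_or_ne x 0 with rfl | hx
    · exact ⟨y, zero_mem _, mem_span_singleton_self y⟩
    obtain ⟨k, hk⟩ := Function.ne_iff.mp hx
    refine ⟨x, mem_span_singleton_self x, mem_span_singleton.mpr ⟨y k / x k, funext fun i => ?_⟩⟩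
    rw [Pi.smul_apply, smul_eq_mul, div_mul_eq_mul_div, div_eq_iff hk]
    linear_combination -h k i
  calc finrank K (span K {x, y}) ≤ finrank K (K ∙ z) :=
        finrank_mono (span_le.mpr (Set.insert_subset hxz (Set.singleton_subset_iff.mpr hyz)))
    _ ≤ 1 := by simpa using finrank_span_le_card ({z} : Set (ι → K))

theorem eq_zero_or_eq_zero_of_forall_mul_eq_zero {M₀ ι κ : Type*} [MulZeroClass M₀]
    [NoZeroDivisors M₀] {u : ι → M₀} {v : κ → M₀} (h : ∀ i j, u i * v j = 0) :
    u = 0 ∨ v = 0 := by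
  by_contra! ⟨hu, hv⟩
  obtain ⟨i, hi⟩ := Function.ne_iff.mp hu
  obtain ⟨j, hj⟩ := Function.ne_iff.mp hv
  exact mul_ne_zero hi hj (h i j)

section Hodge

variable (n₁ n₂ : Fin 4 → ℝ)

-- Twice the `e₀₁, e₀₂, e₀₃` coefficients of the selfdual and antiselfdual projections of
-- `n₁ ∧ n₂` (Hodge star of `B`: `e₀₁ ↦ e₂₃, e₀₂ ↦ e₁₃, e₀₃ ↦ -e₁₂`).
def selfDualPart : Fin 3 → ℝ :=
  ![pluecker n₁ n₂ 0 1 + pluecker n₁ n₂ 2 3, pluecker n₁ n₂ 0 2 + pluecker n₁ n₂ 1 3,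
    pluecker n₁ n₂ 0 3 - pluecker n₁ n₂ 1 2]

def antiSelfDualPart : Fin 3 → ℝ :=
  ![pluecker n₁ n₂ 0 1 - pluecker n₁ n₂ 2 3, pluecker n₁ n₂ 0 2 - pluecker n₁ n₂ 1 3,
    pluecker n₁ n₂ 0 3 + pluecker n₁ n₂ 1 2]

theorem antiSelfDualPart_eq_zero_iff :
    antiSelfDualPart n₁ n₂ = 0 ↔
      pluecker n₁ n₂ 0 1 = pluecker n₁ n₂ 2 3 ∧ pluecker n₁ n₂ 0 2 = pluecker n₁ n₂ 1 3 ∧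
        pluecker n₁ n₂ 0 3 = -pluecker n₁ n₂ 1 2 := by
  simp only [antiSelfDualPart, funext_iff, Fin.forall_fin_succ]
  simp [sub_eq_zero, add_eq_zero_iff_eq_neg]

theorem selfDualPart_eq_zero_iff :
    selfDualPart n₁ n₂ = 0 ↔
      pluecker n₁ n₂ 0 1 = -pluecker n₁ n₂ 2 3 ∧ pluecker n₁ n₂ 0 2 = -pluecker n₁ n₂ 1 3 ∧
        pluecker n₁ n₂ 0 3 = pluecker n₁ n₂ 1 2 := by
  simp only [selfDualPart, funext_iff, Fin.forall_fin_succ]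
  simp [sub_eq_zero, add_eq_zero_iff_eq_neg]

theorem antiSelfDualPart_mul_selfDualPart_eq_zero (h₁₁ : B n₁ n₁ = 0) (h₁₂ : B n₁ n₂ = 0)
    (h₂₂ : B n₂ n₂ = 0) (i j : Fin 3) :
    antiSelfDualPart n₁ n₂ i * selfDualPart n₁ n₂ j = 0 := by
  unfold B at h₁₁ h₁₂ h₂₂
  fin_cases i <;> fin_cases j <;>
    simp only [antiSelfDualPart, selfDualPart, pluecker, Fin.zero_eta, Fin.mk_one, Fin.reduceFinMk,
      Matrix.cons_val_zero, Matrix.cons_val_one, Matrix.cons_val] <;>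
    grind

theorem finrank_span_pair_le_one_of_selfDualPart_eq_zero_of_antiSelfDualPart_eq_zero
    (hsd : selfDualPart n₁ n₂ = 0) (hasd : antiSelfDualPart n₁ n₂ = 0) :
    finrank ℝ (span ℝ {n₁, n₂}) ≤ 1 := by
  rw [selfDualPart_eq_zero_iff] at hsd
  rw [antiSelfDualPart_eq_zero_iff] at hasd
  simp only [pluecker] at hsd hasd
  refine finrank_span_pair_le_one_of_mul_eq_mul fun i j => ?_
  fin_cases i <;> fin_cases j <;>
    simp only [Fin.zero_eta, Fin.mk_one, Fin.reduceFinMk] <;>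
    linarith

end Hodge

theorem stmt_4 (n₁ n₂ : Fin 4 → ℝ)
    (hdim : Module.finrank ℝ (Submodule.span ℝ ({n₁, n₂} : Set (Fin 4 → ℝ))) = 2)
    (hnull : TotallyNull (Submodule.span ℝ ({n₁, n₂} : Set (Fin 4 → ℝ)))) :
    Xor'
      (pluecker n₁ n₂ 0 1 = pluecker n₁ n₂ 2 3 ∧
       pluecker n₁ n₂ 0 2 = pluecker n₁ n₂ 1 3 ∧
       pluecker n₁ n₂ 0 3 = -pluecker n₁ n₂ 1 2)
      (pluecker n₁ n₂ 0 1 = -pluecker n₁ n₂ 2 3 ∧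
       pluecker n₁ n₂ 0 2 = -pluecker n₁ n₂ 1 3 ∧
       pluecker n₁ n₂ 0 3 = pluecker n₁ n₂ 1 2) := by
  rw [← antiSelfDualPart_eq_zero_iff, ← selfDualPart_eq_zero_iff]
  have hn₁ : n₁ ∈ span ℝ {n₁, n₂} := subset_span (by simp)
  have hn₂ : n₂ ∈ span ℝ {n₁, n₂} := subset_span (by simp)
  refine (xor_iff_or_and_not_and _ _).2
    ⟨eq_zero_or_eq_zero_of_forall_mul_eq_zero ?_, fun ⟨hasd, hsd⟩ => ?_⟩
  · exact antiSelfDualPart_mul_selfDualPart_eq_zero n₁ n₂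
      (hnull _ hn₁ _ hn₁) (hnull _ hn₁ _ hn₂) (hnull _ hn₂ _ hn₂)
  · have := finrank_span_pair_le_one_of_selfDualPart_eq_zero_of_antiSelfDualPart_eq_zero
      n₁ n₂ hsd hasd
    omega
end

section
/- Identify ℝ⁴ with ℝ² × ℝ². A 2-dimensional subspace N ⊆ ℝ⁴ is totally null with respect to B if and only if there exists a linear map A : ℝ² → ℝ² preserving the Euclidean inner product on ℝ² (i.e. an orthogonal map A ∈ O(2)) such that N = {(v, A v) : v ∈ ℝ²} is the graph of A; moreover, such an orthogonal map A is unique. -/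
/-- Identifying ℝ⁴ ≅ ℝ² × ℝ², the graph of a linear map `A : ℝ² → ℝ²`,
as a subset of ℝ⁴. -/
def graphSet (A : (Fin 2 → ℝ) →ₗ[ℝ] (Fin 2 → ℝ)) : Set (Fin 4 → ℝ) :=
  {y | ∃ v : Fin 2 → ℝ, y = ![v 0, v 1, A v 0, A v 1]}

open Module Matrix Function

namespace LinearMap

variable {K M M₂ : Type*} [Field K] [AddCommGroup M] [Module K M] [AddCommGroup M₂] [Module K M₂]

theorem graph_injective : Injective (graph : (M →ₗ[K] M₂) → Submodule K (M × M₂)) := by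
  intro f g h
  ext x
  have : (x, f x) ∈ g.graph := h ▸ (f.mem_graph_iff _).2 rfl
  exact (g.mem_graph_iff _).1 this

theorem finrank_graph (f : M →ₗ[K] M₂) : finrank K f.graph = finrank K M := by
  rw [graph_eq_range_prod, finrank_range_of_inj fun x y h => congrArg Prod.fst h]

end LinearMap

/-- `G ≤ Rⁿ × Rⁿ` is totally null for the split form `x ⬝ᵥ x' - y ⬝ᵥ y'`. -/
def IsSplitNull {R ι : Type*} [CommRing R] [Fintype ι] (G : Submodule R ((ι → R) × (ι → R))) :
    Prop :=
  ∀ p ∈ G, ∀ q ∈ G, p.1 ⬝ᵥ q.1 = p.2 ⬝ᵥ q.2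

theorem isSplitNull_graph_iff {R ι : Type*} [CommRing R] [Fintype ι]
    (A : (ι → R) →ₗ[R] (ι → R)) : IsSplitNull A.graph ↔ ∀ v w, A v ⬝ᵥ A w = v ⬝ᵥ w := by
  simp only [IsSplitNull, LinearMap.mem_graph_iff, Prod.forall]
  constructor
  · intro h v w
    exact (h v (A v) rfl w (A w) rfl).symm
  · rintro h v _ rfl w _ rfl
    exact (h v w).symm

section OrderedField

variable {R ι : Type*} [Field R] [LinearOrder R] [IsStrictOrderedRing R] [Fintype ι]

theorem IsSplitNull.injective_fst {G : Submodule R ((ι → R) × (ι → R))} (hG : IsSplitNull G) :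
    Injective ((LinearMap.fst R _ _).comp G.subtype) := by
  refine (injective_iff_map_eq_zero _).2 fun p hp => ?_
  have hp₁ : (p : (ι → R) × (ι → R)).1 = 0 := hp
  have hp₂ : (p : (ι → R) × (ι → R)).2 ⬝ᵥ (p : (ι → R) × (ι → R)).2 = 0 := by
    rw [← hG p p.2 p p.2, hp₁, zero_dotProduct]
  exact Subtype.ext (Prod.ext hp₁ (dotProduct_self_eq_zero.1 hp₂))

theorem IsSplitNull.bijective_fst {G : Submodule R ((ι → R) × (ι → R))} (hG : IsSplitNull G)
    (hdim : finrank R G = Fintype.card ι) : Bijective (Prod.fst ∘ G.subtype) :=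
  ⟨hG.injective_fst, (LinearMap.injective_iff_surjective_of_finrank_eq_finrank
    (by rw [hdim, finrank_fintype_fun_eq_card])).1 hG.injective_fst⟩

theorem isSplitNull_iff_existsUnique_eq_graph (G : Submodule R ((ι → R) × (ι → R))) :
    (finrank R G = Fintype.card ι ∧ IsSplitNull G) ↔
      ∃! A : (ι → R) →ₗ[R] (ι → R), (∀ v w, A v ⬝ᵥ A w = v ⬝ᵥ w) ∧ G = A.graph := by
  constructor
  · rintro ⟨hdim, hG⟩
    obtain ⟨A, rfl⟩ := Submodule.exists_eq_graph (hG.bijective_fst hdim)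
    exact ⟨A, ⟨(isSplitNull_graph_iff A).1 hG, rfl⟩,
      fun A' hA' => LinearMap.graph_injective hA'.2.symm⟩
  · rintro ⟨A, ⟨hA, rfl⟩, -⟩
    exact ⟨by rw [LinearMap.finrank_graph, finrank_fintype_fun_eq_card],
      (isSplitNull_graph_iff A).2 hA⟩

end OrderedField

def splitFin4 : (Fin 4 → ℝ) ≃ₗ[ℝ] (Fin 2 → ℝ) × (Fin 2 → ℝ) where
  toFun y := (![y 0, y 1], ![y 2, y 3])
  invFun p := ![p.1 0, p.1 1, p.2 0, p.2 1]
  map_add' y z := by ext i <;> fin_cases i <;> rfl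
  map_smul' c y := by ext i <;> fin_cases i <;> rfl
  left_inv y := by ext i; fin_cases i <;> rfl
  right_inv p := by ext i <;> fin_cases i <;> rfl

theorem B_eq_splitFin4 (y z : Fin 4 → ℝ) :
    B y z = (splitFin4 y).1 ⬝ᵥ (splitFin4 z).1 - (splitFin4 y).2 ⬝ᵥ (splitFin4 z).2 := by
  simp only [B, splitFin4, LinearEquiv.coe_mk, LinearMap.coe_mk, AddHom.coe_mk, vec2_dotProduct']
  ring

theorem totallyNull_iff_isSplitNull_map (N : Submodule ℝ (Fin 4 → ℝ)) :
    TotallyNull N ↔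
      IsSplitNull (N.map (splitFin4 : (Fin 4 → ℝ) →ₗ[ℝ] (Fin 2 → ℝ) × (Fin 2 → ℝ))) := by
  simp only [TotallyNull, IsSplitNull, Submodule.mem_map, forall_exists_index, and_imp,
    forall_apply_eq_imp_iff₂, B_eq_splitFin4, sub_eq_zero]
  rfl

theorem graphSet_eq_map_splitFin4_symm (A : (Fin 2 → ℝ) →ₗ[ℝ] (Fin 2 → ℝ)) :
    graphSet A = A.graph.map (splitFin4.symm : _ →ₗ[ℝ] (Fin 4 → ℝ)) := by
  ext y
  simp only [graphSet, Set.mem_ofPred_eq, SetLike.mem_coe, Submodule.mem_map,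
    LinearMap.mem_graph_iff, Prod.exists]
  constructor
  · rintro ⟨v, rfl⟩
    exact ⟨v, _, rfl, rfl⟩
  · rintro ⟨v, _, rfl, rfl⟩
    exact ⟨v, rfl⟩

theorem coe_eq_graphSet_iff (N : Submodule ℝ (Fin 4 → ℝ)) (A : (Fin 2 → ℝ) →ₗ[ℝ] (Fin 2 → ℝ)) :
    (N : Set (Fin 4 → ℝ)) = graphSet A ↔
      N.map (splitFin4 : (Fin 4 → ℝ) →ₗ[ℝ] (Fin 2 → ℝ) × (Fin 2 → ℝ)) = A.graph := by
  rw [graphSet_eq_map_splitFin4_symm, SetLike.coe_set_eq, eq_comm, Submodule.map_symm_eq_iff]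

theorem stmt_6 (N : Submodule ℝ (Fin 4 → ℝ)) :
    (Module.finrank ℝ N = 2 ∧ TotallyNull N) ↔
    ∃! A : (Fin 2 → ℝ) →ₗ[ℝ] (Fin 2 → ℝ),
      (∀ v w : Fin 2 → ℝ, A v 0 * A w 0 + A v 1 * A w 1 = v 0 * w 0 + v 1 * w 1) ∧
      (N : Set (Fin 4 → ℝ)) = graphSet A := by
  rw [← LinearEquiv.finrank_map_eq splitFin4 N, totallyNull_iff_isSplitNull_map]
  simp only [← vec2_dotProduct, coe_eq_graphSet_iff]
  simpa only [Fintype.card_fin] using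
    isSplitNull_iff_existsUnique_eq_graph (N.map splitFin4.toLinearMap)
end

section
/- Let I and J be open intervals of ℝ, let ρ : I → ℝ be three times differentiable with ρ(t) ∈ J and ρ'(t) ≠ 0 for all t ∈ I, and let x : J → ℝ be three times differentiable with x(ρ(t)) = t for all t ∈ I. Then for every t ∈ I, writing r = ρ(t), the equality r² x'''(r) + r x''(r) − x'(r) = 0 holds if and only if ρ'''(t) ρ'(t) ρ(t)² − 3 ρ''(t)² ρ(t)² + ρ''(t) ρ'(t)² ρ(t) + ρ'(t)⁴ = 0. In other words, a function ρ with nonvanishing derivative satisfies the nonlinear third-order equation ρ''' ρ' ρ² − 3 (ρ'')² ρ² + ρ'' (ρ')² ρ + (ρ')⁴ = 0 if and only if its inverse function x satisfies the linear ODE ρ² x''' + ρ x'' − x' = 0. -/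
/-!
Differentiating the identity `x (ρ t) = t` three times by the chain rule gives
`x' ρ' = 1`, `x'' ρ'² + x' ρ'' = 0` and `x''' ρ'³ + 3 x'' ρ' ρ'' + x' ρ''' = 0`, so
`x' = 1/ρ'`, `x'' = -ρ''/ρ'³`, `x''' = (3ρ''² - ρ'ρ''')/ρ'⁵` at `ρ t`. Substituting,
`ρ'⁵ (ρ² x''' + ρ x'' - x')` is minus the left-hand side of the nonlinear equation,
and `ρ' ≠ 0`.
-/

open Set

theorem HasDerivAt.unique_of_eqOn {f g : ℝ → ℝ} {s : Set ℝ} {t f' g' : ℝ} (hs : IsOpen s)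
    (hfg : EqOn f g s) (ht : t ∈ s) (hf : HasDerivAt f f' t) (hg : HasDerivAt g g' t) :
    f' = g' :=
  hf.unique (hg.congr_of_eventuallyEq (hfg.eventuallyEq_of_mem (hs.mem_nhds ht)))

namespace Set.LeftInvOn

variable {I : Set ℝ} {ρ x : ℝ → ℝ}

theorem deriv_comp_mul_deriv (hI : IsOpen I) (hinv : LeftInvOn x ρ I)
    (hρ1 : ∀ t ∈ I, DifferentiableAt ℝ ρ t) (hx1 : ∀ t ∈ I, DifferentiableAt ℝ x (ρ t))
    {t : ℝ} (ht : t ∈ I) :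
    deriv x (ρ t) * deriv ρ t = 1 :=
  HasDerivAt.unique_of_eqOn (f := x ∘ ρ) hI (fun _ hs => hinv hs) ht
    ((hx1 t ht).hasDerivAt.comp t (hρ1 t ht).hasDerivAt) (hasDerivAt_id t)

theorem second_order_relation (hI : IsOpen I) (hinv : LeftInvOn x ρ I)
    (hρ1 : ∀ t ∈ I, DifferentiableAt ℝ ρ t) (hρ2 : ∀ t ∈ I, DifferentiableAt ℝ (deriv ρ) t)
    (hx1 : ∀ t ∈ I, DifferentiableAt ℝ x (ρ t))
    (hx2 : ∀ t ∈ I, DifferentiableAt ℝ (deriv x) (ρ t)) {t : ℝ} (ht : t ∈ I) :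
    deriv (deriv x) (ρ t) * deriv ρ t ^ 2 + deriv x (ρ t) * deriv (deriv ρ) t = 0 := by
  have hx' : HasDerivAt (fun s => deriv x (ρ s)) (deriv (deriv x) (ρ t) * deriv ρ t) t :=
    (hx2 t ht).hasDerivAt.comp t (hρ1 t ht).hasDerivAt
  have h := HasDerivAt.unique_of_eqOn (f := fun s => deriv x (ρ s) * deriv ρ s) hI
    (fun _ hs => hinv.deriv_comp_mul_deriv hI hρ1 hx1 hs) ht
    (hx'.mul (hρ2 t ht).hasDerivAt) (hasDerivAt_const t (1 : ℝ))
  linear_combination h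

theorem third_order_relation (hI : IsOpen I) (hinv : LeftInvOn x ρ I)
    (hρ1 : ∀ t ∈ I, DifferentiableAt ℝ ρ t) (hρ2 : ∀ t ∈ I, DifferentiableAt ℝ (deriv ρ) t)
    (hρ3 : ∀ t ∈ I, DifferentiableAt ℝ (deriv (deriv ρ)) t)
    (hx1 : ∀ t ∈ I, DifferentiableAt ℝ x (ρ t))
    (hx2 : ∀ t ∈ I, DifferentiableAt ℝ (deriv x) (ρ t))
    (hx3 : ∀ t ∈ I, DifferentiableAt ℝ (deriv (deriv x)) (ρ t)) {t : ℝ} (ht : t ∈ I) :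
    deriv (deriv (deriv x)) (ρ t) * deriv ρ t ^ 3
      + 3 * deriv (deriv x) (ρ t) * deriv ρ t * deriv (deriv ρ) t
      + deriv x (ρ t) * deriv (deriv (deriv ρ)) t = 0 := by
  have hρ'' := (hρ2 t ht).hasDerivAt
  have hx' : HasDerivAt (fun s => deriv x (ρ s)) (deriv (deriv x) (ρ t) * deriv ρ t) t :=
    (hx2 t ht).hasDerivAt.comp t (hρ1 t ht).hasDerivAt
  have hx'' : HasDerivAt (fun s => deriv (deriv x) (ρ s))
      (deriv (deriv (deriv x)) (ρ t) * deriv ρ t) t :=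
    (hx3 t ht).hasDerivAt.comp t (hρ1 t ht).hasDerivAt
  have h := HasDerivAt.unique_of_eqOn
    (f := fun s => deriv (deriv x) (ρ s) * deriv ρ s ^ 2 + deriv x (ρ s) * deriv (deriv ρ) s) hI
    (fun _ hs => hinv.second_order_relation hI hρ1 hρ2 hx1 hx2 hs) ht
    ((hx''.mul (hρ''.fun_pow 2)).add (hx'.mul (hρ3 t ht).hasDerivAt)) (hasDerivAt_const t (0 : ℝ))
  linear_combination h

end Set.LeftInvOn

theorem inverse_ode_polynomial_identity {p p₁ p₂ p₃ a b c : ℝ} (e₁ : a * p₁ = 1)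
    (e₂ : b * p₁ ^ 2 + a * p₂ = 0) (e₃ : c * p₁ ^ 3 + 3 * b * p₁ * p₂ + a * p₃ = 0) :
    (p ^ 2 * c + p * b - a) * p₁ ^ 5
      = -(p₃ * p₁ * p ^ 2 - 3 * p₂ ^ 2 * p ^ 2 + p₂ * p₁ ^ 2 * p + p₁ ^ 4) := by
  linear_combination (p ^ 2 * p₁ ^ 2) * e₃ + (p * p₁ ^ 3 - 3 * p ^ 2 * p₁ * p₂) * e₂
    + (3 * p₂ ^ 2 * p ^ 2 - p₃ * p₁ * p ^ 2 - p₂ * p₁ ^ 2 * p - p₁ ^ 4) * e₁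

theorem stmt_8_general (I J : Set ℝ)
    (hIopen : IsOpen I)
    (ρ x : ℝ → ℝ)
    (hρJ : ∀ t ∈ I, ρ t ∈ J)
    (hρ' : ∀ t ∈ I, deriv ρ t ≠ 0)
    (hρ1 : ∀ t ∈ I, DifferentiableAt ℝ ρ t)
    (hρ2 : ∀ t ∈ I, DifferentiableAt ℝ (deriv ρ) t)
    (hρ3 : ∀ t ∈ I, DifferentiableAt ℝ (deriv (deriv ρ)) t)
    (hx1 : ∀ r ∈ J, DifferentiableAt ℝ x r)
    (hx2 : ∀ r ∈ J, DifferentiableAt ℝ (deriv x) r)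
    (hx3 : ∀ r ∈ J, DifferentiableAt ℝ (deriv (deriv x)) r)
    (hinv : ∀ t ∈ I, x (ρ t) = t) :
    ∀ t ∈ I,
      ((ρ t) ^ 2 * deriv (deriv (deriv x)) (ρ t) + ρ t * deriv (deriv x) (ρ t)
          - deriv x (ρ t) = 0) ↔
      (deriv (deriv (deriv ρ)) t * deriv ρ t * (ρ t) ^ 2
          - 3 * (deriv (deriv ρ) t) ^ 2 * (ρ t) ^ 2
          + deriv (deriv ρ) t * (deriv ρ t) ^ 2 * ρ t
          + (deriv ρ t) ^ 4 = 0) := by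
  intro t ht
  have hinv' : LeftInvOn x ρ I := fun s hs => hinv s hs
  have hx1' s (hs : s ∈ I) := hx1 _ (hρJ s hs)
  have hx2' s (hs : s ∈ I) := hx2 _ (hρJ s hs)
  have key := inverse_ode_polynomial_identity (p := ρ t)
    (hinv'.deriv_comp_mul_deriv hIopen hρ1 hx1' ht)
    (hinv'.second_order_relation hIopen hρ1 hρ2 hx1' hx2' ht)
    (hinv'.third_order_relation hIopen hρ1 hρ2 hρ3 hx1' hx2' (fun s hs => hx3 _ (hρJ s hs)) ht)
  have hρ'5 : deriv ρ t ^ 5 ≠ 0 := pow_ne_zero 5 (hρ' t ht)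
  rw [← mul_left_inj' hρ'5, zero_mul, key, neg_eq_zero]

theorem stmt_8 (I J : Set ℝ)
    (hIopen : IsOpen I) (hIconv : Convex ℝ I)
    (hJopen : IsOpen J) (hJconv : Convex ℝ J)
    (ρ x : ℝ → ℝ)
    (hρJ : ∀ t ∈ I, ρ t ∈ J)
    (hρ' : ∀ t ∈ I, deriv ρ t ≠ 0)
    (hρ1 : ∀ t ∈ I, DifferentiableAt ℝ ρ t)
    (hρ2 : ∀ t ∈ I, DifferentiableAt ℝ (deriv ρ) t)
    (hρ3 : ∀ t ∈ I, DifferentiableAt ℝ (deriv (deriv ρ)) t)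
    (hx1 : ∀ r ∈ J, DifferentiableAt ℝ x r)
    (hx2 : ∀ r ∈ J, DifferentiableAt ℝ (deriv x) r)
    (hx3 : ∀ r ∈ J, DifferentiableAt ℝ (deriv (deriv x)) r)
    (hinv : ∀ t ∈ I, x (ρ t) = t) :
    ∀ t ∈ I,
      ((ρ t) ^ 2 * deriv (deriv (deriv x)) (ρ t) + ρ t * deriv (deriv x) (ρ t)
          - deriv x (ρ t) = 0) ↔
      (deriv (deriv (deriv ρ)) t * deriv ρ t * (ρ t) ^ 2
          - 3 * (deriv (deriv ρ) t) ^ 2 * (ρ t) ^ 2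
          + deriv (deriv ρ) t * (deriv ρ t) ^ 2 * ρ t
          + (deriv ρ t) ^ 4 = 0) :=
  stmt_8_general I J hIopen ρ x hρJ hρ' hρ1 hρ2 hρ3 hx1 hx2 hx3 hinv
end

section
/- Let I ⊆ ℝ be an open interval and let ρ : I → ℝ be three times differentiable with ρ(t) > 0 and ρ'(t) ≠ 0 for all t ∈ I. If ρ satisfies ρ'''(t) ρ'(t) ρ(t)² − 3 ρ''(t)² ρ(t)² + ρ''(t) ρ'(t)² ρ(t) + ρ'(t)⁴ = 0 for all t ∈ I, then there exist real constants α, β, γ such that t = (1/2) α ρ(t)² + β log ρ(t) + γ for all t ∈ I. -/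
/-!
The quantity `A = (ρ'² - ρ ρ'') / (ρ ρ'³)` is a first integral: its derivative is the left-hand
side of the equation divided by `-ρ² ρ'⁴`, so `A ≡ c`. Then
`(ρ / ρ')' = (ρ'² - ρ ρ'') / ρ'² = c ρ ρ'`, so `ρ / ρ' = α ρ² + β` with `α = c / 2`.
Since `dt/dρ = 1 / ρ' = α ρ + β / ρ`, integrating once more gives
`t = α ρ² / 2 + β log ρ + γ`.
-/

open Real

theorem IsOpen.exists_const_of_hasDerivAt_zero {s : Set ℝ} (hs : IsOpen s)
    (hs' : IsPreconnected s) {f : ℝ → ℝ} (hf : ∀ x ∈ s, HasDerivAt f 0 x) :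
    ∃ a, ∀ x ∈ s, f x = a :=
  hs.exists_is_const_of_deriv_eq_zero hs'
    (fun x hx => (hf x hx).differentiableAt.differentiableWithinAt) (fun x hx => (hf x hx).deriv)

section ProfileODE

variable {f f₁ f₂ : ℝ → ℝ} {f₃ t : ℝ}

theorem hasDerivAt_first_integral (h : HasDerivAt f (f₁ t) t)
    (h₁ : HasDerivAt f₁ (f₂ t) t) (h₂ : HasDerivAt f₂ f₃ t) (hf : f t ≠ 0) (hf₁ : f₁ t ≠ 0) :
    HasDerivAt (fun s => (f₁ s ^ 2 - f s * f₂ s) / (f s * f₁ s ^ 3))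
      (-(f₃ * f₁ t * f t ^ 2 - 3 * f₂ t ^ 2 * f t ^ 2 + f₂ t * f₁ t ^ 2 * f t + f₁ t ^ 4)
        / (f t ^ 2 * f₁ t ^ 4)) t := by
  refine (((h₁.fun_pow 2).fun_sub (h.fun_mul h₂)).fun_div (h.fun_mul (h₁.fun_pow 3))
    (mul_ne_zero hf (pow_ne_zero 3 hf₁))).congr_deriv ?_
  field_simp
  ring

theorem hasDerivAt_div_deriv_sub (c : ℝ) (h : HasDerivAt f (f₁ t) t)
    (h₁ : HasDerivAt f₁ (f₂ t) t) (hf₁ : f₁ t ≠ 0) :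
    HasDerivAt (fun s => f s / f₁ s - c / 2 * f s ^ 2)
      ((f₁ t ^ 2 - f t * f₂ t - c * (f t * f₁ t ^ 3)) / f₁ t ^ 2) t := by
  refine ((h.fun_div h₁ hf₁).fun_sub ((h.fun_pow 2).const_mul (c / 2))).congr_deriv ?_
  field_simp
  ring

theorem hasDerivAt_quadratic_add_log (α β : ℝ) (h : HasDerivAt f (f₁ t) t) (hf : f t ≠ 0) :
    HasDerivAt (fun s => 1 / 2 * α * f s ^ 2 + β * log (f s))
      (f₁ t * (α * f t ^ 2 + β) / f t) t := by
  refine (((h.fun_pow 2).const_mul (1 / 2 * α)).fun_add ((h.log hf).const_mul β)).congr_deriv ?_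
  field_simp
  ring

end ProfileODE

theorem stmt_9 (I : Set ℝ) (hIopen : IsOpen I) (hIconv : Convex ℝ I)
    (ρ : ℝ → ℝ)
    (hpos : ∀ t ∈ I, 0 < ρ t)
    (hρ' : ∀ t ∈ I, deriv ρ t ≠ 0)
    (hρ1 : ∀ t ∈ I, DifferentiableAt ℝ ρ t)
    (hρ2 : ∀ t ∈ I, DifferentiableAt ℝ (deriv ρ) t)
    (hρ3 : ∀ t ∈ I, DifferentiableAt ℝ (deriv (deriv ρ)) t)
    (hode : ∀ t ∈ I,
      deriv (deriv (deriv ρ)) t * deriv ρ t * (ρ t) ^ 2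
        - 3 * (deriv (deriv ρ) t) ^ 2 * (ρ t) ^ 2
        + deriv (deriv ρ) t * (deriv ρ t) ^ 2 * ρ t
        + (deriv ρ t) ^ 4 = 0) :
    ∃ α β γ : ℝ, ∀ t ∈ I,
      t = (1 / 2) * α * (ρ t) ^ 2 + β * Real.log (ρ t) + γ := by
  have hI := hIconv.isPreconnected
  have h0 t (ht : t ∈ I) := (hρ1 t ht).hasDerivAt
  have h1 t (ht : t ∈ I) := (hρ2 t ht).hasDerivAt
  have h2 t (ht : t ∈ I) := (hρ3 t ht).hasDerivAt
  obtain ⟨c, hc⟩ := hIopen.exists_const_of_hasDerivAt_zero hI fun t ht => by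
    simpa [hode t ht] using
      hasDerivAt_first_integral (h0 t ht) (h1 t ht) (h2 t ht) (hpos t ht).ne' (hρ' t ht)
  have hkey t (ht : t ∈ I) :
      deriv ρ t ^ 2 - ρ t * deriv (deriv ρ) t - c * (ρ t * deriv ρ t ^ 3) = 0 := by
    rw [sub_eq_zero, ← div_eq_iff (mul_ne_zero (hpos t ht).ne' (pow_ne_zero 3 (hρ' t ht)))]
    exact hc t ht
  obtain ⟨β, hβ⟩ := hIopen.exists_const_of_hasDerivAt_zero hI fun t ht => by
    simpa [hkey t ht] using hasDerivAt_div_deriv_sub c (h0 t ht) (h1 t ht) (hρ' t ht)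
  obtain ⟨γ, hγ⟩ := hIopen.exists_const_of_hasDerivAt_zero hI fun t ht => by
    have hslope : deriv ρ t * (c / 2 * ρ t ^ 2 + β) / ρ t = 1 := by
      rw [← hβ t ht]
      field_simp [hρ' t ht, (hpos t ht).ne']
      ring
    simpa [hslope] using
      (hasDerivAt_quadratic_add_log (c / 2) β (h0 t ht) (hpos t ht).ne').fun_sub (hasDerivAt_id' t)
  exact ⟨c / 2, β, -γ, fun t ht => by linarith [hγ t ht]⟩
end

section
/- Let λ ∈ ℝ, let I ⊆ ℝ be an open interval, and let κ, a : I → ℝ be smooth functions such that κ(t) ≠ λ for all t ∈ I and a' = κ + a² on I (the structure equation of the orthonormal frame adapted to the Killing vector). Suppose the following three equations hold identically on I (primes denote derivatives with respect to t): (E1) 10(κ−λ)³κ'''' − 70(κ−λ)²κ'''κ' − 49(κ−λ)²(κ'')² + 280(κ−λ)(κ')²κ'' + 8(κ−λ)³(2κ+7λ)κ'' − 20(κ−λ)²(κ+6λ)(κ')² − 175(κ')⁴ + (κ−λ)⁴(κ−9λ)(9κ−λ) = 0; (E2) −10(κ−λ)³aκ''' + (154/3)(κ−λ)²aκ''κ'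 − 20(κ−λ)³a²κ'' − (4/3)(κ−λ)³(3κ−7λ)κ'' − (140/3)(κ−λ)a(κ')³ + (5/3)(κ−λ)²(21a²+4κ−11λ)(κ')² − (4/3)(κ−λ)³(15a²+12κ+7λ)aκ' + (1/3)(κ−λ)⁴(κ−9λ)(9κ−λ) = 0; (E3) 30(κ−λ)³a²κ'' − 49(κ−λ)²a²(κ')² + 2(κ−λ)³(15a²−3κ−28λ)aκ' + (κ−λ)⁴(κ−9λ)(9κ−λ) = 0. Then (9κ(t)−λ)(κ(t)−9λ)λ = 0 for all t ∈ I. -/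
set_option maxHeartbeats 4000000 in
set_option maxRecDepth 100000 in
theorem stmt_13 (lam : ℝ) (I : Set ℝ) (hIopen : IsOpen I) (hIconv : Convex ℝ I)
    (κ a : ℝ → ℝ)
    (hκ : ContDiffOn ℝ (⊤ : ℕ∞) κ I) (ha : ContDiffOn ℝ (⊤ : ℕ∞) a I)
    (hne : ∀ t ∈ I, κ t ≠ lam)
    (hstruct : ∀ t ∈ I, deriv a t = κ t + (a t) ^ 2)
    (hE1 : ∀ t ∈ I,
      10 * (κ t - lam) ^ 3 * deriv^[4] κ t
        - 70 * (κ t - lam) ^ 2 * deriv^[3] κ t * deriv κ t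
        - 49 * (κ t - lam) ^ 2 * (deriv^[2] κ t) ^ 2
        + 280 * (κ t - lam) * (deriv κ t) ^ 2 * deriv^[2] κ t
        + 8 * (κ t - lam) ^ 3 * (2 * κ t + 7 * lam) * deriv^[2] κ t
        - 20 * (κ t - lam) ^ 2 * (κ t + 6 * lam) * (deriv κ t) ^ 2
        - 175 * (deriv κ t) ^ 4
        + (κ t - lam) ^ 4 * (κ t - 9 * lam) * (9 * κ t - lam) = 0)
    (hE2 : ∀ t ∈ I,
      -10 * (κ t - lam) ^ 3 * a t * deriv^[3] κ t
        + (154 / 3) * (κ t - lam) ^ 2 * a t * deriv^[2] κ t * deriv κ t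
        - 20 * (κ t - lam) ^ 3 * (a t) ^ 2 * deriv^[2] κ t
        - (4 / 3) * (κ t - lam) ^ 3 * (3 * κ t - 7 * lam) * deriv^[2] κ t
        - (140 / 3) * (κ t - lam) * a t * (deriv κ t) ^ 3
        + (5 / 3) * (κ t - lam) ^ 2 * (21 * (a t) ^ 2 + 4 * κ t - 11 * lam) * (deriv κ t) ^ 2
        - (4 / 3) * (κ t - lam) ^ 3 * (15 * (a t) ^ 2 + 12 * κ t + 7 * lam) * a t * deriv κ t
        + (1 / 3) * (κ t - lam) ^ 4 * (κ t - 9 * lam) * (9 * κ t - lam) = 0)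
    (hE3 : ∀ t ∈ I,
      30 * (κ t - lam) ^ 3 * (a t) ^ 2 * deriv^[2] κ t
        - 49 * (κ t - lam) ^ 2 * (a t) ^ 2 * (deriv κ t) ^ 2
        + 2 * (κ t - lam) ^ 3 * (15 * (a t) ^ 2 - 3 * κ t - 28 * lam) * a t * deriv κ t
        + (κ t - lam) ^ 4 * (κ t - 9 * lam) * (9 * κ t - lam) = 0) :
    ∀ t ∈ I, (9 * κ t - lam) * (κ t - 9 * lam) * lam = 0 := by
  intro t ht
  have ht' : I ∈ nhds t := hIopen.mem_nhds ht
  have hu : κ t - lam ≠ 0 := sub_ne_zero.2 (hne t ht)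
  by_cases hA0 : a t = 0
  · have h9 : (κ t - lam) ^ 4 * ((κ t - 9 * lam) * (9 * κ t - lam)) = 0 := by
      linear_combination hE3 t ht - ((-49 : ℝ) * (κ t - lam) ^ 2 * (a t) * (deriv κ t) ^ 2 + (30 : ℝ) * (κ t - lam) ^ 3 * (a t) * (deriv^[2] κ t) + (30 : ℝ) * (κ t - lam) ^ 3 * (a t) ^ 2 * (deriv κ t) + (-6 : ℝ) * (κ t - lam) ^ 4 * (deriv κ t) + (-62 : ℝ) * lam * (κ t - lam) ^ 3 * (deriv κ t)) * hA0
    rcases mul_eq_zero.1 h9 with h | h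
    · exact absurd h (pow_ne_zero _ hu)
    · linear_combination lam * h
  · have h2 : deriv^[2] κ = deriv (deriv κ) := by
      rw [Function.iterate_succ_apply', Function.iterate_one]
    have h3 : deriv^[3] κ = deriv (deriv^[2] κ) := Function.iterate_succ_apply' deriv 2 κ
    have h4 : deriv^[4] κ = deriv (deriv^[3] κ) := Function.iterate_succ_apply' deriv 3 κ
    have hc1 : ContDiffOn ℝ (⊤ : ℕ∞) (deriv κ) I := hκ.deriv_of_isOpen hIopen (by simp)
    have hc2 : ContDiffOn ℝ (⊤ : ℕ∞) (deriv^[2] κ) I := by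
      rw [h2]; exact hc1.deriv_of_isOpen hIopen (by simp)
    have hc3 : ContDiffOn ℝ (⊤ : ℕ∞) (deriv^[3] κ) I := by
      rw [h3]; exact hc2.deriv_of_isOpen hIopen (by simp)
    have Hk : HasDerivAt κ (deriv κ t) t :=
      ((hκ.differentiableOn (by simp)).differentiableAt ht').hasDerivAt
    have Hk1 : HasDerivAt (deriv κ) (deriv^[2] κ t) t := by
      rw [h2]; exact ((hc1.differentiableOn (by simp)).differentiableAt ht').hasDerivAt
    have Hk2 : HasDerivAt (deriv^[2] κ) (deriv^[3] κ t) t := by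
      rw [h3]; exact ((hc2.differentiableOn (by simp)).differentiableAt ht').hasDerivAt
    have Hk3 : HasDerivAt (deriv^[3] κ) (deriv^[4] κ t) t := by
      rw [h4]; exact ((hc3.differentiableOn (by simp)).differentiableAt ht').hasDerivAt
    have Ha : HasDerivAt a (κ t + (a t) ^ 2) t := by
      have h := ((ha.differentiableOn (by simp)).differentiableAt ht').hasDerivAt
      rwa [hstruct t ht] at h
    have Hu : HasDerivAt (fun x => κ x - lam) (deriv κ t) t := Hk.sub_const lam
    have hg3 : ∀ x ∈ I, 30 * (κ x - lam) ^ 3 * (a x) ^ 2 * (deriv^[2] κ x) - 49 * (κ x - lam) ^ 2 * (a x) ^ 2 * (deriv κ x) ^ 2 + 2 * (κ x - lam) ^ 3 * (15 * (a x) ^ 2 - 3 * κ x - 28 * lam) * (a x) * (deriv κ x) + (κ x - lam) ^ 4 * ((κ x - 9 * lam) * (9 * κ x - lam)) = 0 := fun x hx => by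
      linear_combination hE3 x hx
    have hd3zero : deriv (fun x => 30 * (κ x - lam) ^ 3 * (a x) ^ 2 * (deriv^[2] κ x) - 49 * (κ x - lam) ^ 2 * (a x) ^ 2 * (deriv κ x) ^ 2 + 2 * (κ x - lam) ^ 3 * (15 * (a x) ^ 2 - 3 * κ x - 28 * lam) * (a x) * (deriv κ x) + (κ x - lam) ^ 4 * ((κ x - 9 * lam) * (9 * κ x - lam))) t = 0 := by
      have heq : (fun x => 30 * (κ x - lam) ^ 3 * (a x) ^ 2 * (deriv^[2] κ x) - 49 * (κ x - lam) ^ 2 * (a x) ^ 2 * (deriv κ x) ^ 2 + 2 * (κ x - lam) ^ 3 * (15 * (a x) ^ 2 - 3 * κ x - 28 * lam) * (a x) * (deriv κ x) + (κ x - lam) ^ 4 * ((κ x - 9 * lam) * (9 * κ x - lam))) =ᶠ[nhds t] (fun _ => (0:ℝ)) :=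
        Filter.eventuallyEq_of_mem ht' hg3
      rw [heq.deriv_eq]; simp
    have H3 := (((((((Hu.pow 3).const_mul (30:ℝ)).mul (Ha.pow 2)).mul Hk2).sub ((((Hu.pow 2).const_mul (49:ℝ)).mul (Ha.pow 2)).mul (Hk1.pow 2))).add (((((Hu.pow 3).const_mul (2:ℝ)).mul ((((Ha.pow 2).const_mul (15:ℝ)).sub (Hk.const_mul (3:ℝ))).sub_const (28 * lam))).mul Ha).mul Hk1)).add ((Hu.pow 4).mul ((Hk.sub_const (9 * lam)).mul ((Hk.const_mul (9:ℝ)).sub_const lam))))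
    have hg2 : ∀ x ∈ I, -(30 * (κ x - lam) ^ 3 * (a x) * (deriv^[3] κ x)) + 154 * (κ x - lam) ^ 2 * (a x) * (deriv^[2] κ x) * (deriv κ x) - 60 * (κ x - lam) ^ 3 * (a x) ^ 2 * (deriv^[2] κ x) - 4 * (κ x - lam) ^ 3 * (3 * κ x - 7 * lam) * (deriv^[2] κ x) - 140 * (κ x - lam) * (a x) * (deriv κ x) ^ 3 + 5 * (κ x - lam) ^ 2 * (21 * (a x) ^ 2 + 4 * κ x - 11 * lam) * (deriv κ x) ^ 2 - 4 * (κ x - lam) ^ 3 * (15 * (a x) ^ 2 + 12 * κ x + 7 * lam) * (a x) * (deriv κ x) + (κ x - lam) ^ 4 * ((κ x - 9 * lam) * (9 * κ x - lam)) = 0 := fun x hx => by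
      linear_combination (3 : ℝ) * hE2 x hx
    have hd2zero : deriv (fun x => -(30 * (κ x - lam) ^ 3 * (a x) * (deriv^[3] κ x)) + 154 * (κ x - lam) ^ 2 * (a x) * (deriv^[2] κ x) * (deriv κ x) - 60 * (κ x - lam) ^ 3 * (a x) ^ 2 * (deriv^[2] κ x) - 4 * (κ x - lam) ^ 3 * (3 * κ x - 7 * lam) * (deriv^[2] κ x) - 140 * (κ x - lam) * (a x) * (deriv κ x) ^ 3 + 5 * (κ x - lam) ^ 2 * (21 * (a x) ^ 2 + 4 * κ x - 11 * lam) * (deriv κ x) ^ 2 - 4 * (κ x - lam) ^ 3 * (15 * (a x) ^ 2 + 12 * κ x + 7 * lam) * (a x) * (deriv κ x) + (κ x - lam) ^ 4 * ((κ x - 9 * lam) * (9 * κ x - lam))) t = 0 := by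
      have heq : (fun x => -(30 * (κ x - lam) ^ 3 * (a x) * (deriv^[3] κ x)) + 154 * (κ x - lam) ^ 2 * (a x) * (deriv^[2] κ x) * (deriv κ x) - 60 * (κ x - lam) ^ 3 * (a x) ^ 2 * (deriv^[2] κ x) - 4 * (κ x - lam) ^ 3 * (3 * κ x - 7 * lam) * (deriv^[2] κ x) - 140 * (κ x - lam) * (a x) * (deriv κ x) ^ 3 + 5 * (κ x - lam) ^ 2 * (21 * (a x) ^ 2 + 4 * κ x - 11 * lam) * (deriv κ x) ^ 2 - 4 * (κ x - lam) ^ 3 * (15 * (a x) ^ 2 + 12 * κ x + 7 * lam) * (a x) * (deriv κ x) + (κ x - lam) ^ 4 * ((κ x - 9 * lam) * (9 * κ x - lam))) =ᶠ[nhds t] (fun _ => (0:ℝ)) :=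
        Filter.eventuallyEq_of_mem ht' hg2
      rw [heq.deriv_eq]; simp
    have H2 := (((((((((((Hu.pow 3).const_mul (30:ℝ)).mul Ha).mul Hk3).neg.add (((((Hu.pow 2).const_mul (154:ℝ)).mul Ha).mul Hk2).mul Hk1)).sub ((((Hu.pow 3).const_mul (60:ℝ)).mul (Ha.pow 2)).mul Hk2)).sub ((((Hu.pow 3).const_mul (4:ℝ)).mul ((Hk.const_mul (3:ℝ)).sub_const (7 * lam))).mul Hk2)).sub (((Hu.const_mul (140:ℝ)).mul Ha).mul (Hk1.pow 3))).add ((((Hu.pow 2).const_mul (5:ℝ)).mul ((((Ha.pow 2).const_mul (21:ℝ)).add (Hk.const_mul (4:ℝ))).sub_const (11 * lam))).mul (Hk1.pow 2))).sub (((((Hu.pow 3).const_mul (4:ℝ)).mul ((((Ha.pow 2).const_mul (15:ℝ)).add (Hk.const_mul (12:ℝ))).add_const (7 * lam))).mul Ha).mul Hk1)).add ((Hu.pow 4).mul ((Hk.sub_const (9 * lam)).mul ((Hk.const_mul (9:ℝ)).sub_const lam))))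
    obtain ⟨U, hU⟩ : ∃ x : ℝ, x = κ t - lam := ⟨_, rfl⟩
    have hu' : U ≠ 0 := by rw [hU]; exact hu
    have hE1t : (-175 : ℝ) * (deriv κ t) ^ 4 + (280 : ℝ) * U * (deriv κ t) ^ 2 * (deriv^[2] κ t) + (-49 : ℝ) * U ^ 2 * (deriv^[2] κ t) ^ 2 + (-70 : ℝ) * U ^ 2 * (deriv κ t) * (deriv^[3] κ t) + (10 : ℝ) * U ^ 3 * (deriv^[4] κ t) + (-20 : ℝ) * U ^ 3 * (deriv κ t) ^ 2 + (16 : ℝ) * U ^ 4 * (deriv^[2] κ t) + (9 : ℝ) * U ^ 6 + (-140 : ℝ) * lam * U ^ 2 * (deriv κ t) ^ 2 + (72 : ℝ) * lam * U ^ 3 * (deriv^[2] κ t) + (-64 : ℝ) * lam * U ^ 5 + (-64 : ℝ) * lam ^ 2 * U ^ 4 = 0 := by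
      linear_combination hE1 t ht + ((9 : ℝ) * (κ t - lam) ^ 5 + (10 : ℝ) * (deriv^[4] κ t) * (κ t - lam) ^ 2 + (16 : ℝ) * (deriv^[2] κ t) * (κ t - lam) ^ 3 + (-49 : ℝ) * (deriv^[2] κ t) ^ 2 * (κ t - lam) + (-70 : ℝ) * (deriv κ t) * (deriv^[3] κ t) * (κ t - lam) + (-20 : ℝ) * (deriv κ t) ^ 2 * (κ t - lam) ^ 2 + (280 : ℝ) * (deriv κ t) ^ 2 * (deriv^[2] κ t) + (9 : ℝ) * U * (κ t - lam) ^ 4 + (10 : ℝ) * U * (deriv^[4] κ t) * (κ t - lam) + (16 : ℝ) * U * (deriv^[2] κ t) * (κ t - lam) ^ 2 + (-49 : ℝ) * U * (deriv^[2] κ t) ^ 2 + (-70 : ℝ) * U * (deriv κ t) * (deriv^[3] κ t) + (-20 : ℝ) * U * (deriv κ t) ^ 2 * (κ t - lam) + (9 : ℝ) * U ^ 2 * (κ t - lam) ^ 3 + (10 : ℝ) * U ^ 2 * (deriv^[4] κ t) + (16 : ℝ) * U ^ 2 * (deriv^[2] κ t) * (κ t - lam) + (-20 : ℝ) * U ^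 2 * (deriv κ t) ^ 2 + (9 : ℝ) * U ^ 3 * (κ t - lam) ^ 2 + (16 : ℝ) * U ^ 3 * (deriv^[2] κ t) + (9 : ℝ) * U ^ 4 * (κ t - lam) + (9 : ℝ) * U ^ 5 + (-64 : ℝ) * lam * (κ t - lam) ^ 4 + (72 : ℝ) * lam * (deriv^[2] κ t) * (κ t - lam) ^ 2 + (-140 : ℝ) * lam * (deriv κ t) ^ 2 * (κ t - lam) + (-64 : ℝ) * lam * U * (κ t - lam) ^ 3 + (72 : ℝ) * lam * U * (deriv^[2] κ t) * (κ t - lam) + (-140 : ℝ) * lam * U * (deriv κ t) ^ 2 + (-64 : ℝ) * lam * U ^ 2 * (κ t - lam) ^ 2 + (72 : ℝ) * lam * U ^ 2 * (deriv^[2] κ t) + (-64 : ℝ) * lam * U ^ 3 * (κ t - lam) + (-64 : ℝ) * lam * U ^ 4 + (-64 : ℝ) * lam ^ 2 * (κ t - lam) ^ 3 + (-64 : ℝ) * lam ^ 2 * U * (κ t - lam) ^ 2 + (-64 : ℝ) * lam ^ 2 * U ^ 2 * (κ t - lam) + (-64 : ℝ) * lam ^ 2 * U ^ 3) * hU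
    have hE2t : (-140 : ℝ) * U * (a t) * (deriv κ t) ^ 3 + (154 : ℝ) * U ^ 2 * (a t) * (deriv κ t) * (deriv^[2] κ t) + (105 : ℝ) * U ^ 2 * (a t) ^ 2 * (deriv κ t) ^ 2 + (20 : ℝ) * U ^ 3 * (deriv κ t) ^ 2 + (-30 : ℝ) * U ^ 3 * (a t) * (deriv^[3] κ t) + (-60 : ℝ) * U ^ 3 * (a t) ^ 2 * (deriv^[2] κ t) + (-60 : ℝ) * U ^ 3 * (a t) ^ 3 * (deriv κ t) + (-12 : ℝ) * U ^ 4 * (deriv^[2] κ t) + (-48 : ℝ) * U ^ 4 * (a t) * (deriv κ t) + (9 : ℝ) * U ^ 6 + (-35 : ℝ) * lam * U ^ 2 * (deriv κ t) ^ 2 + (16 : ℝ) * lam * U ^ 3 * (deriv^[2] κ t) + (-76 : ℝ) * lam * U ^ 3 * (a t) * (deriv κ t) + (-64 : ℝ) * lam * U ^ 5 + (-64 : ℝ) * lam ^ 2 * U ^ 4 = 0 := by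
      linear_combination (3 : ℝ) * hE2 t ht + ((9 : ℝ) * (κ t - lam) ^ 5 + (-12 : ℝ) * (deriv^[2] κ t) * (κ t - lam) ^ 3 + (20 : ℝ) * (deriv κ t) ^ 2 * (κ t - lam) ^ 2 + (-30 : ℝ) * (a t) * (deriv^[3] κ t) * (κ t - lam) ^ 2 + (-48 : ℝ) * (a t) * (deriv κ t) * (κ t - lam) ^ 3 + (154 : ℝ) * (a t) * (deriv κ t) * (deriv^[2] κ t) * (κ t - lam) + (-140 : ℝ) * (a t) * (deriv κ t) ^ 3 + (-60 : ℝ) * (a t) ^ 2 * (deriv^[2] κ t) * (κ t - lam) ^ 2 + (105 : ℝ) * (a t) ^ 2 * (deriv κ t) ^ 2 * (κ t - lam) + (-60 : ℝ) * (a t) ^ 3 * (deriv κ t) * (κ t - lam) ^ 2 + (9 : ℝ) * U * (κ t - lam) ^ 4 + (-12 : ℝ) * U * (deriv^[2] κ t) * (κ t - lam) ^ 2 + (20 : ℝ) * U * (deriv κ t) ^ 2 * (κ t - lam) + (-30 : ℝ) * U * (a t) * (deriv^[3] κ t) * (κ t - lam) + (-48 : ℝ) * U * (a t) * (deriv κ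 t) * (κ t - lam) ^ 2 + (154 : ℝ) * U * (a t) * (deriv κ t) * (deriv^[2] κ t) + (-60 : ℝ) * U * (a t) ^ 2 * (deriv^[2] κ t) * (κ t - lam) + (105 : ℝ) * U * (a t) ^ 2 * (deriv κ t) ^ 2 + (-60 : ℝ) * U * (a t) ^ 3 * (deriv κ t) * (κ t - lam) + (9 : ℝ) * U ^ 2 * (κ t - lam) ^ 3 + (-12 : ℝ) * U ^ 2 * (deriv^[2] κ t) * (κ t - lam) + (20 : ℝ) * U ^ 2 * (deriv κ t) ^ 2 + (-30 : ℝ) * U ^ 2 * (a t) * (deriv^[3] κ t) + (-48 : ℝ) * U ^ 2 * (a t) * (deriv κ t) * (κ t - lam) + (-60 : ℝ) * U ^ 2 * (a t) ^ 2 * (deriv^[2] κ t) + (-60 : ℝ) * U ^ 2 * (a t) ^ 3 * (deriv κ t) + (9 : ℝ) * U ^ 3 * (κ t - lam) ^ 2 + (-12 : ℝ) * U ^ 3 * (deriv^[2] κ t) + (-48 : ℝ) * U ^ 3 * (a t) * (deriv κ t) + (9 : ℝ) * U ^ 4 * (κ t - lam) + (9 : ℝ) * U ^ 5 + (-64 :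 ℝ) * lam * (κ t - lam) ^ 4 + (16 : ℝ) * lam * (deriv^[2] κ t) * (κ t - lam) ^ 2 + (-35 : ℝ) * lam * (deriv κ t) ^ 2 * (κ t - lam) + (-76 : ℝ) * lam * (a t) * (deriv κ t) * (κ t - lam) ^ 2 + (-64 : ℝ) * lam * U * (κ t - lam) ^ 3 + (16 : ℝ) * lam * U * (deriv^[2] κ t) * (κ t - lam) + (-35 : ℝ) * lam * U * (deriv κ t) ^ 2 + (-76 : ℝ) * lam * U * (a t) * (deriv κ t) * (κ t - lam) + (-64 : ℝ) * lam * U ^ 2 * (κ t - lam) ^ 2 + (16 : ℝ) * lam * U ^ 2 * (deriv^[2] κ t) + (-76 : ℝ) * lam * U ^ 2 * (a t) * (deriv κ t) + (-64 : ℝ) * lam * U ^ 3 * (κ t - lam) + (-64 : ℝ) * lam * U ^ 4 + (-64 : ℝ) * lam ^ 2 * (κ t - lam) ^ 3 + (-64 : ℝ) * lam ^ 2 * U * (κ t - lam) ^ 2 + (-64 : ℝ) * lam ^ 2 * U ^ 2 * (κ t - lam) + (-64 : ℝ) * lam ^ 2 * U ^ 3) * hU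
    have hE3t : (-49 : ℝ) * U ^ 2 * (a t) ^ 2 * (deriv κ t) ^ 2 + (30 : ℝ) * U ^ 3 * (a t) ^ 2 * (deriv^[2] κ t) + (30 : ℝ) * U ^ 3 * (a t) ^ 3 * (deriv κ t) + (-6 : ℝ) * U ^ 4 * (a t) * (deriv κ t) + (9 : ℝ) * U ^ 6 + (-62 : ℝ) * lam * U ^ 3 * (a t) * (deriv κ t) + (-64 : ℝ) * lam * U ^ 5 + (-64 : ℝ) * lam ^ 2 * U ^ 4 = 0 := by
      linear_combination hE3 t ht + ((9 : ℝ) * (κ t - lam) ^ 5 + (-6 : ℝ) * (a t) * (deriv κ t) * (κ t - lam) ^ 3 + (30 : ℝ) * (a t) ^ 2 * (deriv^[2] κ t) * (κ t - lam) ^ 2 + (-49 : ℝ) * (a t) ^ 2 * (deriv κ t) ^ 2 * (κ t - lam) + (30 : ℝ) * (a t) ^ 3 * (deriv κ t) * (κ t - lam) ^ 2 + (9 : ℝ) * U * (κ t - lam) ^ 4 + (-6 : ℝ) * U * (a t) * (deriv κ t) * (κ t - lam) ^ 2 + (30 : ℝ) * U * (a t) ^ 2 * (deriv^[2] κ t)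 * (κ t - lam) + (-49 : ℝ) * U * (a t) ^ 2 * (deriv κ t) ^ 2 + (30 : ℝ) * U * (a t) ^ 3 * (deriv κ t) * (κ t - lam) + (9 : ℝ) * U ^ 2 * (κ t - lam) ^ 3 + (-6 : ℝ) * U ^ 2 * (a t) * (deriv κ t) * (κ t - lam) + (30 : ℝ) * U ^ 2 * (a t) ^ 2 * (deriv^[2] κ t) + (30 : ℝ) * U ^ 2 * (a t) ^ 3 * (deriv κ t) + (9 : ℝ) * U ^ 3 * (κ t - lam) ^ 2 + (-6 : ℝ) * U ^ 3 * (a t) * (deriv κ t) + (9 : ℝ) * U ^ 4 * (κ t - lam) + (9 : ℝ) * U ^ 5 + (-64 : ℝ) * lam * (κ t - lam) ^ 4 + (-62 : ℝ) * lam * (a t) * (deriv κ t) * (κ t - lam) ^ 2 + (-64 : ℝ) * lam * U * (κ t - lam) ^ 3 + (-62 : ℝ) * lam * U * (a t) * (deriv κ t) * (κ t - lam) + (-64 : ℝ) * lam * U ^ 2 * (κ t - lam) ^ 2 + (-62 : ℝ) * lam * U ^ 2 * (a t) * (deriv κ t) + (-64 : ℝ) * lam * U ^ 3 * (κ t - lam)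 + (-64 : ℝ) * lam * U ^ 4 + (-64 : ℝ) * lam ^ 2 * (κ t - lam) ^ 3 + (-64 : ℝ) * lam ^ 2 * U * (κ t - lam) ^ 2 + (-64 : ℝ) * lam ^ 2 * U ^ 2 * (κ t - lam) + (-64 : ℝ) * lam ^ 2 * U ^ 3) * hU
    have hD3 : (-98 : ℝ) * U * (a t) ^ 2 * (deriv κ t) ^ 3 + (-8 : ℝ) * U ^ 2 * (a t) ^ 2 * (deriv κ t) * (deriv^[2] κ t) + (-8 : ℝ) * U ^ 2 * (a t) ^ 3 * (deriv κ t) ^ 2 + (-122 : ℝ) * U ^ 3 * (a t) * (deriv κ t) ^ 2 + (30 : ℝ) * U ^ 3 * (a t) ^ 2 * (deriv^[3] κ t) + (90 : ℝ) * U ^ 3 * (a t) ^ 3 * (deriv^[2] κ t) + (90 : ℝ) * U ^ 3 * (a t) ^ 4 * (deriv κ t) + (54 : ℝ) * U ^ 4 * (a t) * (deriv^[2] κ t) + (84 : ℝ) * U ^ 4 * (a t) ^ 2 * (deriv κ t) + (48 : ℝ) * U ^ 5 * (deriv κ t) + (-284 : ℝ) * lam * U ^ 2 * (a t) * (deriv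 κ t) ^ 2 + (-2 : ℝ) * lam * U ^ 3 * (a t) * (deriv^[2] κ t) + (28 : ℝ) * lam * U ^ 3 * (a t) ^ 2 * (deriv κ t) + (-388 : ℝ) * lam * U ^ 4 * (deriv κ t) + (-318 : ℝ) * lam ^ 2 * U ^ 3 * (deriv κ t) = 0 := by
      have H3z := H3.deriv.symm.trans hd3zero
      simp only [Pi.mul_apply, Pi.pow_apply, Pi.add_apply, Pi.sub_apply, Pi.neg_apply] at H3z
      linear_combination H3z + ((48 : ℝ) * (deriv κ t) * (κ t - lam) ^ 4 + (54 : ℝ) * (a t) * (deriv^[2] κ t) * (κ t - lam) ^ 3 + (-122 : ℝ) * (a t) * (deriv κ t) ^ 2 * (κ t - lam) ^ 2 + (30 : ℝ) * (a t) ^ 2 * (deriv^[3] κ t) * (κ t - lam) ^ 2 + (84 : ℝ) * (a t) ^ 2 * (deriv κ t) * (κ t - lam) ^ 3 + (-8 : ℝ) * (a t) ^ 2 * (deriv κ t) * (deriv^[2] κ t) * (κ t - lam) + (-98 : ℝ) * (a t) ^ 2 * (deriv κ t) ^ 3 + (90 : ℝ) * (a t) ^ 3 * (deriv^[2] κ t)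 * (κ t - lam) ^ 2 + (-8 : ℝ) * (a t) ^ 3 * (deriv κ t) ^ 2 * (κ t - lam) + (90 : ℝ) * (a t) ^ 4 * (deriv κ t) * (κ t - lam) ^ 2 + (48 : ℝ) * U * (deriv κ t) * (κ t - lam) ^ 3 + (54 : ℝ) * U * (a t) * (deriv^[2] κ t) * (κ t - lam) ^ 2 + (-122 : ℝ) * U * (a t) * (deriv κ t) ^ 2 * (κ t - lam) + (30 : ℝ) * U * (a t) ^ 2 * (deriv^[3] κ t) * (κ t - lam) + (84 : ℝ) * U * (a t) ^ 2 * (deriv κ t) * (κ t - lam) ^ 2 + (-8 : ℝ) * U * (a t) ^ 2 * (deriv κ t) * (deriv^[2] κ t) + (90 : ℝ) * U * (a t) ^ 3 * (deriv^[2] κ t) * (κ t - lam) + (-8 : ℝ) * U * (a t) ^ 3 * (deriv κ t) ^ 2 + (90 : ℝ) * U * (a t) ^ 4 * (deriv κ t) * (κ t - lam) + (48 : ℝ) * U ^ 2 * (deriv κ t) * (κ t - lam) ^ 2 + (54 : ℝ) * U ^ 2 * (a t) * (deriv^[2] κ t) * (κ t - lam) + (-122 : ℝ) * U ^ 2 *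 (a t) * (deriv κ t) ^ 2 + (30 : ℝ) * U ^ 2 * (a t) ^ 2 * (deriv^[3] κ t) + (84 : ℝ) * U ^ 2 * (a t) ^ 2 * (deriv κ t) * (κ t - lam) + (90 : ℝ) * U ^ 2 * (a t) ^ 3 * (deriv^[2] κ t) + (90 : ℝ) * U ^ 2 * (a t) ^ 4 * (deriv κ t) + (48 : ℝ) * U ^ 3 * (deriv κ t) * (κ t - lam) + (54 : ℝ) * U ^ 3 * (a t) * (deriv^[2] κ t) + (84 : ℝ) * U ^ 3 * (a t) ^ 2 * (deriv κ t) + (48 : ℝ) * U ^ 4 * (deriv κ t) + (-388 : ℝ) * lam * (deriv κ t) * (κ t - lam) ^ 3 + (-2 : ℝ) * lam * (a t) * (deriv^[2] κ t) * (κ t - lam) ^ 2 + (-284 : ℝ) * lam * (a t) * (deriv κ t) ^ 2 * (κ t - lam) + (28 : ℝ) * lam * (a t) ^ 2 * (deriv κ t) * (κ t - lam) ^ 2 + (-388 : ℝ) * lam * U * (deriv κ t) * (κ t - lam) ^ 2 + (-2 : ℝ) * lam * U * (a t) * (deriv^[2] κ t) * (κ t - lam) + (-284 : ℝ) * lam *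 U * (a t) * (deriv κ t) ^ 2 + (28 : ℝ) * lam * U * (a t) ^ 2 * (deriv κ t) * (κ t - lam) + (-388 : ℝ) * lam * U ^ 2 * (deriv κ t) * (κ t - lam) + (-2 : ℝ) * lam * U ^ 2 * (a t) * (deriv^[2] κ t) + (28 : ℝ) * lam * U ^ 2 * (a t) ^ 2 * (deriv κ t) + (-388 : ℝ) * lam * U ^ 3 * (deriv κ t) + (-318 : ℝ) * lam ^ 2 * (deriv κ t) * (κ t - lam) ^ 2 + (-318 : ℝ) * lam ^ 2 * U * (deriv κ t) * (κ t - lam) + (-318 : ℝ) * lam ^ 2 * U ^ 2 * (deriv κ t)) * hU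
    have hD2 : (-140 : ℝ) * (a t) * (deriv κ t) ^ 4 + (-112 : ℝ) * U * (a t) * (deriv κ t) ^ 2 * (deriv^[2] κ t) + (70 : ℝ) * U * (a t) ^ 2 * (deriv κ t) ^ 3 + (-80 : ℝ) * U ^ 2 * (deriv κ t) ^ 3 + (154 : ℝ) * U ^ 2 * (a t) * (deriv^[2] κ t) ^ 2 + (64 : ℝ) * U ^ 2 * (a t) * (deriv κ t) * (deriv^[3] κ t) + (184 : ℝ) * U ^ 2 * (a t) ^ 2 * (deriv κ t) * (deriv^[2] κ t) + (30 : ℝ) * U ^ 2 * (a t) ^ 3 * (deriv κ t) ^ 2 + (146 : ℝ) * U ^ 3 * (deriv κ t) * (deriv^[2] κ t) + (-30 : ℝ) * U ^ 3 * (a t) * (deriv^[4] κ t) + (18 : ℝ) * U ^ 3 * (a t) * (deriv κ t) ^ 2 + (-90 : ℝ) * U ^ 3 * (a t) ^ 2 * (deriv^[3] κ t) + (-180 : ℝ) * U ^ 3 * (a t) ^ 3 * (deriv^[2] κ t) + (-180 : ℝ) * U ^ 3 * (a t) ^ 4 * (deriv κ t) + (-42 : ℝ) * U ^ 4 * (deriv^[3]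 κ t) + (-168 : ℝ) * U ^ 4 * (a t) * (deriv^[2] κ t) + (-228 : ℝ) * U ^ 4 * (a t) ^ 2 * (deriv κ t) + (6 : ℝ) * U ^ 5 * (deriv κ t) + (-210 : ℝ) * lam * U * (deriv κ t) ^ 3 + (132 : ℝ) * lam * U ^ 2 * (deriv κ t) * (deriv^[2] κ t) + (-18 : ℝ) * lam * U ^ 2 * (a t) * (deriv κ t) ^ 2 + (-14 : ℝ) * lam * U ^ 3 * (deriv^[3] κ t) + (-196 : ℝ) * lam * U ^ 3 * (a t) * (deriv^[2] κ t) + (-256 : ℝ) * lam * U ^ 3 * (a t) ^ 2 * (deriv κ t) + (-444 : ℝ) * lam * U ^ 4 * (deriv κ t) + (-332 : ℝ) * lam ^ 2 * U ^ 3 * (deriv κ t) = 0 := by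
      have H2z := H2.deriv.symm.trans hd2zero
      simp only [Pi.mul_apply, Pi.pow_apply, Pi.add_apply, Pi.sub_apply, Pi.neg_apply] at H2z
      linear_combination H2z + ((-42 : ℝ) * (deriv^[3] κ t) * (κ t - lam) ^ 3 + (6 : ℝ) * (deriv κ t) * (κ t - lam) ^ 4 + (146 : ℝ) * (deriv κ t) * (deriv^[2] κ t) * (κ t - lam) ^ 2 + (-80 : ℝ) * (deriv κ t) ^ 3 * (κ t - lam) + (-30 : ℝ) * (a t) * (deriv^[4] κ t) * (κ t - lam) ^ 2 + (-168 : ℝ) * (a t) * (deriv^[2] κ t) * (κ t - lam) ^ 3 + (154 : ℝ) * (a t) * (deriv^[2] κ t) ^ 2 * (κ t - lam) + (64 : ℝ) * (a t) * (deriv κ t) * (deriv^[3] κ t) * (κ t - lam) + (18 : ℝ) * (a t) * (deriv κ t) ^ 2 * (κ t - lam) ^ 2 + (-112 : ℝ) * (a t) * (deriv κ t) ^ 2 * (deriv^[2] κ t) + (-90 : ℝ) * (a t) ^ 2 * (deriv^[3] κ t) * (κ t - lam) ^ 2 + (-228 : ℝ) * (a t) ^ 2 * (deriv κ t) * (κ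 t - lam) ^ 3 + (184 : ℝ) * (a t) ^ 2 * (deriv κ t) * (deriv^[2] κ t) * (κ t - lam) + (70 : ℝ) * (a t) ^ 2 * (deriv κ t) ^ 3 + (-180 : ℝ) * (a t) ^ 3 * (deriv^[2] κ t) * (κ t - lam) ^ 2 + (30 : ℝ) * (a t) ^ 3 * (deriv κ t) ^ 2 * (κ t - lam) + (-180 : ℝ) * (a t) ^ 4 * (deriv κ t) * (κ t - lam) ^ 2 + (-42 : ℝ) * U * (deriv^[3] κ t) * (κ t - lam) ^ 2 + (6 : ℝ) * U * (deriv κ t) * (κ t - lam) ^ 3 + (146 : ℝ) * U * (deriv κ t) * (deriv^[2] κ t) * (κ t - lam) + (-80 : ℝ) * U * (deriv κ t) ^ 3 + (-30 : ℝ) * U * (a t) * (deriv^[4] κ t) * (κ t - lam) + (-168 : ℝ) * U * (a t) * (deriv^[2] κ t) * (κ t - lam) ^ 2 + (154 : ℝ) * U * (a t) * (deriv^[2] κ t) ^ 2 + (64 : ℝ) * U * (a t) * (deriv κ t) * (deriv^[3] κ t) + (18 : ℝ) * U * (a t) * (deriv κ t) ^ 2 * (κ t - lam) + (-90 : ℝ)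 * U * (a t) ^ 2 * (deriv^[3] κ t) * (κ t - lam) + (-228 : ℝ) * U * (a t) ^ 2 * (deriv κ t) * (κ t - lam) ^ 2 + (184 : ℝ) * U * (a t) ^ 2 * (deriv κ t) * (deriv^[2] κ t) + (-180 : ℝ) * U * (a t) ^ 3 * (deriv^[2] κ t) * (κ t - lam) + (30 : ℝ) * U * (a t) ^ 3 * (deriv κ t) ^ 2 + (-180 : ℝ) * U * (a t) ^ 4 * (deriv κ t) * (κ t - lam) + (-42 : ℝ) * U ^ 2 * (deriv^[3] κ t) * (κ t - lam) + (6 : ℝ) * U ^ 2 * (deriv κ t) * (κ t - lam) ^ 2 + (146 : ℝ) * U ^ 2 * (deriv κ t) * (deriv^[2] κ t) + (-30 : ℝ) * U ^ 2 * (a t) * (deriv^[4] κ t) + (-168 : ℝ) * U ^ 2 * (a t) * (deriv^[2] κ t) * (κ t - lam) + (18 : ℝ) * U ^ 2 * (a t) * (deriv κ t) ^ 2 + (-90 : ℝ) * U ^ 2 * (a t) ^ 2 * (deriv^[3] κ t) + (-228 : ℝ) * U ^ 2 * (a t) ^ 2 * (deriv κ t) * (κ t - lam) + (-180 : ℝ)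 * U ^ 2 * (a t) ^ 3 * (deriv^[2] κ t) + (-180 : ℝ) * U ^ 2 * (a t) ^ 4 * (deriv κ t) + (-42 : ℝ) * U ^ 3 * (deriv^[3] κ t) + (6 : ℝ) * U ^ 3 * (deriv κ t) * (κ t - lam) + (-168 : ℝ) * U ^ 3 * (a t) * (deriv^[2] κ t) + (-228 : ℝ) * U ^ 3 * (a t) ^ 2 * (deriv κ t) + (6 : ℝ) * U ^ 4 * (deriv κ t) + (-14 : ℝ) * lam * (deriv^[3] κ t) * (κ t - lam) ^ 2 + (-444 : ℝ) * lam * (deriv κ t) * (κ t - lam) ^ 3 + (132 : ℝ) * lam * (deriv κ t) * (deriv^[2] κ t) * (κ t - lam) + (-210 : ℝ) * lam * (deriv κ t) ^ 3 + (-196 : ℝ) * lam * (a t) * (deriv^[2] κ t) * (κ t - lam) ^ 2 + (-18 : ℝ) * lam * (a t) * (deriv κ t) ^ 2 * (κ t - lam) + (-256 : ℝ) * lam * (a t) ^ 2 * (deriv κ t) * (κ t - lam) ^ 2 + (-14 : ℝ) * lam * U * (deriv^[3] κ t) * (κ t - lam) + (-444 : ℝ) * lam * U * (deriv κ t) * (κ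 t - lam) ^ 2 + (132 : ℝ) * lam * U * (deriv κ t) * (deriv^[2] κ t) + (-196 : ℝ) * lam * U * (a t) * (deriv^[2] κ t) * (κ t - lam) + (-18 : ℝ) * lam * U * (a t) * (deriv κ t) ^ 2 + (-256 : ℝ) * lam * U * (a t) ^ 2 * (deriv κ t) * (κ t - lam) + (-14 : ℝ) * lam * U ^ 2 * (deriv^[3] κ t) + (-444 : ℝ) * lam * U ^ 2 * (deriv κ t) * (κ t - lam) + (-196 : ℝ) * lam * U ^ 2 * (a t) * (deriv^[2] κ t) + (-256 : ℝ) * lam * U ^ 2 * (a t) ^ 2 * (deriv κ t) + (-444 : ℝ) * lam * U ^ 3 * (deriv κ t) + (-332 : ℝ) * lam ^ 2 * (deriv κ t) * (κ t - lam) ^ 2 + (-332 : ℝ) * lam ^ 2 * U * (deriv κ t) * (κ t - lam) + (-332 : ℝ) * lam ^ 2 * U ^ 2 * (deriv κ t)) * hU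
    have hE2r : (3346 : ℝ) * U ^ 4 * (a t) ^ 3 * (deriv κ t) ^ 3 + (-4410 : ℝ) * U ^ 5 * (a t) ^ 4 * (deriv κ t) ^ 2 + (936 : ℝ) * U ^ 6 * (a t) ^ 2 * (deriv κ t) ^ 2 + (-900 : ℝ) * U ^ 6 * (a t) ^ 3 * (deriv^[3] κ t) + (-1440 : ℝ) * U ^ 7 * (a t) ^ 3 * (deriv κ t) + (-1458 : ℝ) * U ^ 8 * (a t) * (deriv κ t) + (810 : ℝ) * U ^ 9 * (a t) ^ 2 + (108 : ℝ) * U ^ 10 + (9282 : ℝ) * lam * U ^ 5 * (a t) ^ 2 * (deriv κ t) ^ 2 + (-6480 : ℝ) * lam * U ^ 6 * (a t) ^ 3 * (deriv κ t) + (9208 : ℝ) * lam * U ^ 7 * (a t) * (deriv κ t) + (-5760 : ℝ) * lam * U ^ 8 * (a t) ^ 2 + (-912 : ℝ) * lam * U ^ 9 + (10848 : ℝ) * lam ^ 2 * U ^ 6 * (a t) * (deriv κ t) + (-5760 : ℝ) * lam ^ 2 * U ^ 7 * (a t) ^ 2 + (256 : ℝ) * lam ^ 2 * U ^ 8 + (1024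 : ℝ) * lam ^ 3 * U ^ 7 = 0 := by linear_combination ((30 : ℝ) * U ^ 3 * (a t) ^ 2) * hE2t + ((-154 : ℝ) * U ^ 2 * (a t) * (deriv κ t) + (60 : ℝ) * U ^ 3 * (a t) ^ 2 + (12 : ℝ) * U ^ 4 + (-16 : ℝ) * lam * U ^ 3) * hE3t
    have ht1 : (136451 : ℝ) * U ^ 6 * (a t) ^ 4 * (deriv κ t) ^ 4 + (-107940 : ℝ) * U ^ 7 * (a t) ^ 5 * (deriv κ t) ^ 3 + (21588 : ℝ) * U ^ 8 * (a t) ^ 3 * (deriv κ t) ^ 3 + (-63000 : ℝ) * U ^ 8 * (a t) ^ 4 * (deriv κ t) * (deriv^[3] κ t) + (-44100 : ℝ) * U ^ 8 * (a t) ^ 6 * (deriv κ t) ^ 2 + (9000 : ℝ) * U ^ 9 * (a t) ^ 4 * (deriv^[4] κ t) + (23160 : ℝ) * U ^ 9 * (a t) ^ 4 * (deriv κ t) ^ 2 + (-34146 : ℝ) * U ^ 10 * (a t) ^ 2 * (deriv κ t) ^ 2 + (-14400 : ℝ) * U ^ 10 * (a t) ^ 5 * (deriv κ t) + (-23580 :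 ℝ) * U ^ 11 * (a t) ^ 3 * (deriv κ t) + (5292 : ℝ) * U ^ 12 * (a t) * (deriv κ t) + (8100 : ℝ) * U ^ 12 * (a t) ^ 4 + (-4320 : ℝ) * U ^ 13 * (a t) ^ 2 + (-3969 : ℝ) * U ^ 14 + (223076 : ℝ) * lam * U ^ 7 * (a t) ^ 3 * (deriv κ t) ^ 3 + (162120 : ℝ) * lam * U ^ 8 * (a t) ^ 4 * (deriv κ t) ^ 2 + (193816 : ℝ) * lam * U ^ 9 * (a t) ^ 2 * (deriv κ t) ^ 2 + (-64800 : ℝ) * lam * U ^ 9 * (a t) ^ 5 * (deriv κ t) + (230880 : ℝ) * lam * U ^ 10 * (a t) ^ 3 * (deriv κ t) + (17052 : ℝ) * lam * U ^ 11 * (a t) * (deriv κ t) + (-57600 : ℝ) * lam * U ^ 11 * (a t) ^ 4 + (11280 : ℝ) * lam * U ^ 12 * (a t) ^ 2 + (56448 : ℝ) * lam * U ^ 13 + (41916 : ℝ) * lam ^ 2 * U ^ 8 * (a t) ^ 2 * (deriv κ t) ^ 2 + (322080 : ℝ) * lam ^ 2 * U ^ 9 * (a t) ^ 3 * (deriv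 κ t) + (-426496 : ℝ) * lam ^ 2 * U ^ 10 * (a t) * (deriv κ t) + (-57600 : ℝ) * lam ^ 2 * U ^ 10 * (a t) ^ 4 + (168960 : ℝ) * lam ^ 2 * U ^ 11 * (a t) ^ 2 + (-144256 : ℝ) * lam ^ 2 * U ^ 12 + (-388864 : ℝ) * lam ^ 3 * U ^ 9 * (a t) * (deriv κ t) + (138240 : ℝ) * lam ^ 3 * U ^ 10 * (a t) ^ 2 + (-401408 : ℝ) * lam ^ 3 * U ^ 11 + (-200704 : ℝ) * lam ^ 4 * U ^ 10 = 0 := by linear_combination ((900 : ℝ) * U ^ 6 * (a t) ^ 4) * hE1t + ((-5999 : ℝ) * U ^ 4 * (a t) ^ 2 * (deriv κ t) ^ 2 + (1470 : ℝ) * U ^ 5 * (a t) ^ 2 * (deriv^[2] κ t) + (-1470 : ℝ) * U ^ 5 * (a t) ^ 3 * (deriv κ t) + (294 : ℝ) * U ^ 6 * (a t) * (deriv κ t) + (-480 : ℝ) * U ^ 7 * (a t) ^ 2 + (-441 : ℝ) * U ^ 8 + (3038 : ℝ) * lam * U ^ 5 * (a t) * (deriv κ t) + (-2160 : ℝ)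 * lam * U ^ 6 * (a t) ^ 2 + (3136 : ℝ) * lam * U ^ 7 + (3136 : ℝ) * lam ^ 2 * U ^ 6) * hE3t
    have hE1r : (87992100 : ℝ) * U ^ 12 * (a t) ^ 7 * (deriv κ t) ^ 4 + (-180684000 : ℝ) * U ^ 13 * (a t) ^ 8 * (deriv κ t) ^ 3 + (39538800 : ℝ) * U ^ 14 * (a t) ^ 6 * (deriv κ t) ^ 3 + (39690000 : ℝ) * U ^ 14 * (a t) ^ 9 * (deriv κ t) ^ 2 + (-8100000 : ℝ) * U ^ 15 * (a t) ^ 7 * (deriv^[4] κ t) + (-111564000 : ℝ) * U ^ 15 * (a t) ^ 7 * (deriv κ t) ^ 2 + (-61122600 : ℝ) * U ^ 16 * (a t) ^ 5 * (deriv κ t) ^ 2 + (12960000 : ℝ) * U ^ 16 * (a t) ^ 8 * (deriv κ t) + (72252000 : ℝ) * U ^ 17 * (a t) ^ 6 * (deriv κ t) + (2041200 : ℝ) * U ^ 18 * (a t) ^ 4 * (deriv κ t) + (-7290000 : ℝ) * U ^ 18 * (a t) ^ 7 + (3888000 : ℝ) * U ^ 19 * (a t) ^ 5 + (3572100 : ℝ)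 * U ^ 20 * (a t) ^ 3 + (383997600 : ℝ) * lam * U ^ 13 * (a t) ^ 6 * (deriv κ t) ^ 3 + (-554148000 : ℝ) * lam * U ^ 14 * (a t) ^ 7 * (deriv κ t) ^ 2 + (405669600 : ℝ) * lam * U ^ 15 * (a t) ^ 5 * (deriv κ t) ^ 2 + (58320000 : ℝ) * lam * U ^ 15 * (a t) ^ 8 * (deriv κ t) + (-570672000 : ℝ) * lam * U ^ 16 * (a t) ^ 6 * (deriv κ t) + (-72802800 : ℝ) * lam * U ^ 17 * (a t) ^ 4 * (deriv κ t) + (51840000 : ℝ) * lam * U ^ 17 * (a t) ^ 7 + (-10152000 : ℝ) * lam * U ^ 18 * (a t) ^ 5 + (-50803200 : ℝ) * lam * U ^ 19 * (a t) ^ 3 + (645699600 : ℝ) * lam ^ 2 * U ^ 14 * (a t) ^ 5 * (deriv κ t) ^ 2 + (-652752000 : ℝ) * lam ^ 2 * U ^ 15 * (a t) ^ 6 * (deriv κ t) + (399974400 : ℝ) * lam ^ 2 * U ^ 16 * (a t) ^ 4 * (deriv κ t) + (51840000 : ℝ) * lam ^ 2 * U ^ 16 * (a t) ^ 7 + (-152064000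 : ℝ) * lam ^ 2 * U ^ 17 * (a t) ^ 5 + (129830400 : ℝ) * lam ^ 2 * U ^ 18 * (a t) ^ 3 + (414489600 : ℝ) * lam ^ 3 * U ^ 15 * (a t) ^ 4 * (deriv κ t) + (-124416000 : ℝ) * lam ^ 3 * U ^ 16 * (a t) ^ 5 + (361267200 : ℝ) * lam ^ 3 * U ^ 17 * (a t) ^ 3 + (180633600 : ℝ) * lam ^ 4 * U ^ 16 * (a t) ^ 3 = 0 := by linear_combination ((-900 : ℝ) * U ^ 6 * (a t) ^ 3) * ht1 + ((63000 : ℝ) * U ^ 8 * (a t) ^ 4 * (deriv κ t)) * hE2r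
    have ht2 : (-3332 : ℝ) * U ^ 4 * (a t) ^ 4 * (deriv κ t) ^ 3 + (4410 : ℝ) * U ^ 5 * (a t) ^ 5 * (deriv κ t) ^ 2 + (-1062 : ℝ) * U ^ 6 * (a t) ^ 3 * (deriv κ t) ^ 2 + (900 : ℝ) * U ^ 6 * (a t) ^ 4 * (deriv^[3] κ t) + (1440 : ℝ) * U ^ 7 * (a t) ^ 4 * (deriv κ t) + (1836 : ℝ) * U ^ 8 * (a t) ^ 2 * (deriv κ t) + (-810 : ℝ) * U ^ 9 * (a t) ^ 3 + (-486 : ℝ) * U ^ 10 * (a t) + (-9114 : ℝ) * lam * U ^ 5 * (a t) ^ 3 * (deriv κ t) ^ 2 + (6480 : ℝ) * lam * U ^ 6 * (a t) ^ 4 * (deriv κ t) + (-8816 : ℝ) * lam * U ^ 7 * (a t) ^ 2 * (deriv κ t) + (5760 : ℝ) * lam * U ^ 8 * (a t) ^ 3 + (3474 : ℝ) * lam * U ^ 9 * (a t) + (-10176 : ℝ) * lam ^ 2 * U ^ 6 * (a t) ^ 2 * (deriv κ t) + (5760 : ℝ) * lam ^ 2 * U ^ 7 * (a t) ^ 3 +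 (3328 : ℝ) * lam ^ 2 * U ^ 8 * (a t) + (-128 : ℝ) * lam ^ 3 * U ^ 7 * (a t) = 0 := by linear_combination ((30 : ℝ) * U ^ 3 * (a t) ^ 2) * hD3 + ((8 : ℝ) * U ^ 2 * (a t) ^ 2 * (deriv κ t) + (-90 : ℝ) * U ^ 3 * (a t) ^ 3 + (-54 : ℝ) * U ^ 4 * (a t) + (2 : ℝ) * lam * U ^ 3 * (a t)) * hE3t
    have hG1 : (-12600 : ℝ) * U ^ 10 * (a t) ^ 7 * (deriv κ t) ^ 3 + (113400 : ℝ) * U ^ 12 * (a t) ^ 6 * (deriv κ t) ^ 2 + (-340200 : ℝ) * U ^ 14 * (a t) ^ 5 * (deriv κ t) + (340200 : ℝ) * U ^ 16 * (a t) ^ 4 + (-151200 : ℝ) * lam * U ^ 11 * (a t) ^ 6 * (deriv κ t) ^ 2 + (-352800 : ℝ) * lam * U ^ 13 * (a t) ^ 5 * (deriv κ t) + (-2305800 : ℝ) * lam * U ^ 15 * (a t) ^ 4 + (-604800 : ℝ) * lam ^ 2 * U ^ 12 * (a t) ^ 5 * (deriv κ t) + (-3225600 : ℝ) * lam ^ 2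 * U ^ 14 * (a t) ^ 4 + (-806400 : ℝ) * lam ^ 3 * U ^ 13 * (a t) ^ 4 = 0 := by linear_combination ((-900 : ℝ) * U ^ 6 * (a t) ^ 3) * ht2 + ((-900 : ℝ) * U ^ 6 * (a t) ^ 4) * hE2r
    have hF1 : (-1 : ℝ) * (a t) ^ 3 * (deriv κ t) ^ 3 + (9 : ℝ) * U ^ 2 * (a t) ^ 2 * (deriv κ t) ^ 2 + (-27 : ℝ) * U ^ 4 * (a t) * (deriv κ t) + (27 : ℝ) * U ^ 6 + (-12 : ℝ) * lam * U * (a t) ^ 2 * (deriv κ t) ^ 2 + (-28 : ℝ) * lam * U ^ 3 * (a t) * (deriv κ t) + (-183 : ℝ) * lam * U ^ 5 + (-48 : ℝ) * lam ^ 2 * U ^ 2 * (a t) * (deriv κ t) + (-256 : ℝ) * lam ^ 2 * U ^ 4 + (-64 : ℝ) * lam ^ 3 * U ^ 3 = 0 := by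
      have hmm : (12600 : ℝ) * U ^ 10 * (a t) ^ 4 ≠ 0 :=
        mul_ne_zero (mul_ne_zero (by norm_num) (pow_ne_zero _ hu')) (pow_ne_zero _ hA0)
      apply mul_left_cancel₀ hmm
      linear_combination hG1
    have ht3 : (79114 : ℝ) * U ^ 6 * (a t) ^ 5 * (deriv κ t) ^ 4 + (-18480 : ℝ) * U ^ 7 * (a t) ^ 6 * (deriv κ t) ^ 3 + (213012 : ℝ) * U ^ 8 * (a t) ^ 4 * (deriv κ t) ^ 3 + (57600 : ℝ) * U ^ 8 * (a t) ^ 5 * (deriv κ t) * (deriv^[3] κ t) + (-264600 : ℝ) * U ^ 8 * (a t) ^ 7 * (deriv κ t) ^ 2 + (-27000 : ℝ) * U ^ 9 * (a t) ^ 5 * (deriv^[4] κ t) + (-384480 : ℝ) * U ^ 9 * (a t) ^ 5 * (deriv κ t) ^ 2 + (-81000 : ℝ) * U ^ 9 * (a t) ^ 6 * (deriv^[3] κ t) + (-73764 : ℝ) * U ^ 10 * (a t) ^ 3 * (deriv κ t) ^ 2 + (-37800 : ℝ) * U ^ 10 * (a t) ^ 4 * (deriv^[3] κ t) + (-86400 :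 ℝ) * U ^ 10 * (a t) ^ 6 * (deriv κ t) + (8640 : ℝ) * U ^ 11 * (a t) ^ 4 * (deriv κ t) + (-56052 : ℝ) * U ^ 12 * (a t) ^ 2 * (deriv κ t) + (48600 : ℝ) * U ^ 12 * (a t) ^ 5 + (45360 : ℝ) * U ^ 13 * (a t) ^ 3 + (12474 : ℝ) * U ^ 14 * (a t) + (732424 : ℝ) * lam * U ^ 7 * (a t) ^ 4 * (deriv κ t) ^ 3 + (-653760 : ℝ) * lam * U ^ 8 * (a t) ^ 5 * (deriv κ t) ^ 2 + (1160744 : ℝ) * lam * U ^ 9 * (a t) ^ 3 * (deriv κ t) ^ 2 + (-12600 : ℝ) * lam * U ^ 9 * (a t) ^ 4 * (deriv^[3] κ t) + (-388800 : ℝ) * lam * U ^ 9 * (a t) ^ 6 * (deriv κ t) + (-985440 : ℝ) * lam * U ^ 10 * (a t) ^ 4 * (deriv κ t) + (191088 : ℝ) * lam * U ^ 11 * (a t) ^ 2 * (deriv κ t) + (-345600 : ℝ) * lam * U ^ 11 * (a t) ^ 5 + (-269640 : ℝ) * lam * U ^ 12 * (a t) ^ 3 + (-177408 : ℝ) * lam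 * U ^ 13 * (a t) + (1588344 : ℝ) * lam ^ 2 * U ^ 8 * (a t) ^ 3 * (deriv κ t) ^ 2 + (-901440 : ℝ) * lam ^ 2 * U ^ 9 * (a t) ^ 4 * (deriv κ t) + (1874176 : ℝ) * lam ^ 2 * U ^ 10 * (a t) ^ 2 * (deriv κ t) + (-345600 : ℝ) * lam ^ 2 * U ^ 10 * (a t) ^ 5 + (-698880 : ℝ) * lam ^ 2 * U ^ 11 * (a t) ^ 3 + (453376 : ℝ) * lam ^ 2 * U ^ 12 * (a t) + (1475584 : ℝ) * lam ^ 3 * U ^ 9 * (a t) ^ 2 * (deriv κ t) + (-376320 : ℝ) * lam ^ 3 * U ^ 10 * (a t) ^ 3 + (1261568 : ℝ) * lam ^ 3 * U ^ 11 * (a t) + (630784 : ℝ) * lam ^ 4 * U ^ 10 * (a t) = 0 := by linear_combination ((900 : ℝ) * U ^ 6 * (a t) ^ 4) * hD2 + ((-4186 : ℝ) * U ^ 4 * (a t) ^ 3 * (deriv κ t) ^ 2 + (-4620 : ℝ) * U ^ 5 * (a t) ^ 3 * (deriv^[2] κ t) + (-900 : ℝ) * U ^ 5 * (a t) ^ 4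 * (deriv κ t) + (-5304 : ℝ) * U ^ 6 * (a t) ^ 2 * (deriv κ t) + (5400 : ℝ) * U ^ 6 * (a t) ^ 5 + (5040 : ℝ) * U ^ 7 * (a t) ^ 3 + (1386 : ℝ) * U ^ 8 * (a t) + (-13508 : ℝ) * lam * U ^ 5 * (a t) ^ 2 * (deriv κ t) + (5880 : ℝ) * lam * U ^ 6 * (a t) ^ 3 + (-9856 : ℝ) * lam * U ^ 7 * (a t) + (-9856 : ℝ) * lam ^ 2 * U ^ 6 * (a t)) * hE3t
    have ht4 : (-263932200 : ℝ) * U ^ 12 * (a t) ^ 8 * (deriv κ t) ^ 4 + (541674000 : ℝ) * U ^ 13 * (a t) ^ 9 * (deriv κ t) ^ 3 + (-119145600 : ℝ) * U ^ 14 * (a t) ^ 7 * (deriv κ t) ^ 3 + (-119070000 : ℝ) * U ^ 14 * (a t) ^ 10 * (deriv κ t) ^ 2 + (24300000 : ℝ) * U ^ 15 * (a t) ^ 8 * (deriv^[4] κ t) + (338094000 : ℝ) * U ^ 15 * (a t) ^ 8 * (deriv κ t) ^ 2 + (185749200 : ℝ) * U ^ 16 * (a t) ^ 6 * (deriv κ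 t) ^ 2 + (-38880000 : ℝ) * U ^ 16 * (a t) ^ 9 * (deriv κ t) + (-226962000 : ℝ) * U ^ 17 * (a t) ^ 7 * (deriv κ t) + (-10886400 : ℝ) * U ^ 18 * (a t) ^ 5 * (deriv κ t) + (21870000 : ℝ) * U ^ 18 * (a t) ^ 8 + (-1458000 : ℝ) * U ^ 19 * (a t) ^ 6 + (-7144200 : ℝ) * U ^ 20 * (a t) ^ 4 + (-1151665200 : ℝ) * lam * U ^ 13 * (a t) ^ 7 * (deriv κ t) ^ 3 + (1657908000 : ℝ) * lam * U ^ 14 * (a t) ^ 8 * (deriv κ t) ^ 2 + (-1212397200 : ℝ) * lam * U ^ 15 * (a t) ^ 6 * (deriv κ t) ^ 2 + (-174960000 : ℝ) * lam * U ^ 15 * (a t) ^ 9 * (deriv κ t) + (1701432000 : ℝ) * lam * U ^ 16 * (a t) ^ 7 * (deriv κ t) + (210243600 : ℝ) * lam * U ^ 17 * (a t) ^ 5 * (deriv κ t) + (-155520000 : ℝ) * lam * U ^ 17 * (a t) ^ 8 + (-38718000 : ℝ) * lam * U ^ 18 * (a t) ^ 6 + (126554400 : ℝ) * lam * U ^ 19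 * (a t) ^ 4 + (-1937401200 : ℝ) * lam ^ 2 * U ^ 14 * (a t) ^ 6 * (deriv κ t) ^ 2 + (1940112000 : ℝ) * lam ^ 2 * U ^ 15 * (a t) ^ 7 * (deriv κ t) + (-1175428800 : ℝ) * lam ^ 2 * U ^ 16 * (a t) ^ 5 * (deriv κ t) + (-155520000 : ℝ) * lam ^ 2 * U ^ 16 * (a t) ^ 8 + (359424000 : ℝ) * lam ^ 2 * U ^ 17 * (a t) ^ 6 + (-409852800 : ℝ) * lam ^ 2 * U ^ 18 * (a t) ^ 4 + (-1250323200 : ℝ) * lam ^ 3 * U ^ 15 * (a t) ^ 5 * (deriv κ t) + (349056000 : ℝ) * lam ^ 3 * U ^ 16 * (a t) ^ 6 + (-1093478400 : ℝ) * lam ^ 3 * U ^ 17 * (a t) ^ 4 + (-554803200 : ℝ) * lam ^ 4 * U ^ 16 * (a t) ^ 4 = 0 := by linear_combination ((-900 : ℝ) * U ^ 6 * (a t) ^ 3) * ht3 + ((-57600 : ℝ) * U ^ 8 * (a t) ^ 5 * (deriv κ t) + (81000 : ℝ) * U ^ 9 * (a t) ^ 6 + (37800 : ℝ) * U ^ 10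 * (a t) ^ 4 + (12600 : ℝ) * lam * U ^ 9 * (a t) ^ 4) * hE2r
    have hG2 : (-357210000000 : ℝ) * U ^ 27 * (a t) ^ 15 * (deriv κ t) ^ 4 + (3061800000000 : ℝ) * U ^ 28 * (a t) ^ 16 * (deriv κ t) ^ 3 + (4286520000000 : ℝ) * U ^ 29 * (a t) ^ 14 * (deriv κ t) ^ 3 + (-27556200000000 : ℝ) * U ^ 30 * (a t) ^ 15 * (deriv κ t) ^ 2 + (-19289340000000 : ℝ) * U ^ 31 * (a t) ^ 13 * (deriv κ t) ^ 2 + (82668600000000 : ℝ) * U ^ 32 * (a t) ^ 14 * (deriv κ t) + (38578680000000 : ℝ) * U ^ 33 * (a t) ^ 12 * (deriv κ t) + (-82668600000000 : ℝ) * U ^ 34 * (a t) ^ 13 + (-28934010000000 : ℝ) * U ^ 35 * (a t) ^ 11 + (-2653560000000 : ℝ) * lam * U ^ 28 * (a t) ^ 14 * (deriv κ t) ^ 3 + (36741600000000 : ℝ) * lam * U ^ 29 * (a t) ^ 15 * (deriv κ t) ^ 2 + (-37353960000000 : ℝ) * lam * U ^ 30 * (a t) ^ 13 * (deriv κ t)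 ^ 2 + (85730400000000 : ℝ) * lam * U ^ 31 * (a t) ^ 14 * (deriv κ t) + (66134880000000 : ℝ) * lam * U ^ 32 * (a t) ^ 12 * (deriv κ t) + (560309400000000 : ℝ) * lam * U ^ 33 * (a t) ^ 13 + (209427120000000 : ℝ) * lam * U ^ 34 * (a t) ^ 11 + (2449440000000 : ℝ) * lam ^ 2 * U ^ 29 * (a t) ^ 13 * (deriv κ t) ^ 2 + (146966400000000 : ℝ) * lam ^ 2 * U ^ 30 * (a t) ^ 14 * (deriv κ t) + (-198404640000000 : ℝ) * lam ^ 2 * U ^ 31 * (a t) ^ 12 * (deriv κ t) + (783820800000000 : ℝ) * lam ^ 2 * U ^ 32 * (a t) ^ 13 + (164928960000000 : ℝ) * lam ^ 2 * U ^ 33 * (a t) ^ 11 + (55520640000000 : ℝ) * lam ^ 3 * U ^ 30 * (a t) ^ 12 * (deriv κ t) + (195955200000000 : ℝ) * lam ^ 3 * U ^ 31 * (a t) ^ 13 + (78382080000000 : ℝ) * lam ^ 3 * U ^ 32 * (a t) ^ 11 + (104509440000000 : ℝ) * lam ^ 4 * U ^ 31 * (a t) ^ 11 = 0 := by linear_combination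 ((-8100000 : ℝ) * U ^ 15 * (a t) ^ 7) * ht4 + ((-24300000 : ℝ) * U ^ 15 * (a t) ^ 8) * hE1r
    have hF2 : (-7 : ℝ) * (a t) ^ 4 * (deriv κ t) ^ 4 + (60 : ℝ) * U * (a t) ^ 5 * (deriv κ t) ^ 3 + (84 : ℝ) * U ^ 2 * (a t) ^ 3 * (deriv κ t) ^ 3 + (-540 : ℝ) * U ^ 3 * (a t) ^ 4 * (deriv κ t) ^ 2 + (-378 : ℝ) * U ^ 4 * (a t) ^ 2 * (deriv κ t) ^ 2 + (1620 : ℝ) * U ^ 5 * (a t) ^ 3 * (deriv κ t) + (756 : ℝ) * U ^ 6 * (a t) * (deriv κ t) + (-1620 : ℝ) * U ^ 7 * (a t) ^ 2 + (-567 : ℝ) * U ^ 8 + (-52 : ℝ) * lam * U * (a t) ^ 3 * (deriv κ t) ^ 3 + (720 : ℝ) * lam * U ^ 2 * (a t) ^ 4 * (deriv κ t) ^ 2 + (-732 : ℝ) * lam * U ^ 3 * (a t) ^ 2 * (deriv κ t) ^ 2 + (1680 : ℝ) * lam * U ^ 4 * (a t) ^ 3 * (deriv κ t) + (1296 : ℝ)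 * lam * U ^ 5 * (a t) * (deriv κ t) + (10980 : ℝ) * lam * U ^ 6 * (a t) ^ 2 + (4104 : ℝ) * lam * U ^ 7 + (48 : ℝ) * lam ^ 2 * U ^ 2 * (a t) ^ 2 * (deriv κ t) ^ 2 + (2880 : ℝ) * lam ^ 2 * U ^ 3 * (a t) ^ 3 * (deriv κ t) + (-3888 : ℝ) * lam ^ 2 * U ^ 4 * (a t) * (deriv κ t) + (15360 : ℝ) * lam ^ 2 * U ^ 5 * (a t) ^ 2 + (3232 : ℝ) * lam ^ 2 * U ^ 6 + (1088 : ℝ) * lam ^ 3 * U ^ 3 * (a t) * (deriv κ t) + (3840 : ℝ) * lam ^ 3 * U ^ 4 * (a t) ^ 2 + (1536 : ℝ) * lam ^ 3 * U ^ 5 + (2048 : ℝ) * lam ^ 4 * U ^ 4 = 0 := by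
      have hmm : (51030000000 : ℝ) * U ^ 27 * (a t) ^ 11 ≠ 0 :=
        mul_ne_zero (mul_ne_zero (by norm_num) (pow_ne_zero _ hu')) (pow_ne_zero _ hA0)
      apply mul_left_cancel₀ hmm
      linear_combination hG2
    have hR1 : (-500 : ℝ) * lam * U ^ 3 * (a t) ^ 8 * (deriv κ t) ^ 2 + (1125 : ℝ) * lam * U ^ 5 * (a t) ^ 7 * (deriv κ t) + (1125 : ℝ) * lam * U ^ 7 * (a t) ^ 6 + (-4000 : ℝ) * lam ^ 2 * U ^ 4 * (a t) ^ 7 * (deriv κ t) + (-8000 : ℝ) * lam ^ 2 * U ^ 6 * (a t) ^ 6 + (-8000 : ℝ) * lam ^ 3 * U ^ 5 * (a t) ^ 6 = 0 := by linear_combination ((1 : ℝ) * (a t) ^ 6) * hF2 + ((-7 : ℝ) * (a t) ^ 7 * (deriv κ t) + (60 : ℝ) * U * (a t) ^ 8 + (21 : ℝ) * U ^ 2 * (a t) ^ 6 + (32 : ℝ) * lam * U * (a t) ^ 6) * hF1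
    have hR1s : (-4 : ℝ) * lam * (a t) ^ 2 * (deriv κ t) ^ 2 + (9 : ℝ) * lam * U ^ 2 * (a t) * (deriv κ t) + (9 : ℝ) * lam * U ^ 4 + (-32 : ℝ) * lam ^ 2 * U * (a t) * (deriv κ t) + (-64 : ℝ) * lam ^ 2 * U ^ 3 + (-64 : ℝ) * lam ^ 3 * U ^ 2 = 0 := by
      have hmm : (125 : ℝ) * U ^ 3 * (a t) ^ 6 ≠ 0 :=
        mul_ne_zero (mul_ne_zero (by norm_num) (pow_ne_zero _ hu')) (pow_ne_zero _ hA0)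
      apply mul_left_cancel₀ hmm
      linear_combination hR1
    have hR2 : (-225 : ℝ) * lam ^ 2 * U ^ 4 * (a t) ^ 5 * (deriv κ t) + (675 : ℝ) * lam ^ 2 * U ^ 6 * (a t) ^ 4 + (-1200 : ℝ) * lam ^ 3 * U ^ 3 * (a t) ^ 5 * (deriv κ t) + (-4800 : ℝ) * lam ^ 3 * U ^ 5 * (a t) ^ 4 + (-4800 : ℝ) * lam ^ 4 * U ^ 4 * (a t) ^ 4 = 0 := by linear_combination ((16 : ℝ) * lam ^ 2 * (a t) ^ 4) * hF1 + ((-4 : ℝ) * lam * (a t) ^ 5 * (deriv κ t) + (27 : ℝ) * lam * U ^ 2 * (a t) ^ 4 + (-16 : ℝ) * lam ^ 2 * U * (a t) ^ 4) * hR1s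
    have hR2s : (-3 : ℝ) * lam ^ 2 * U * (a t) * (deriv κ t) + (9 : ℝ) * lam ^ 2 * U ^ 3 + (-16 : ℝ) * lam ^ 3 * (a t) * (deriv κ t) + (-64 : ℝ) * lam ^ 3 * U ^ 2 + (-64 : ℝ) * lam ^ 4 * U = 0 := by
      have hmm : (75 : ℝ) * U ^ 3 * (a t) ^ 4 ≠ 0 :=
        mul_ne_zero (mul_ne_zero (by norm_num) (pow_ne_zero _ hu')) (pow_ne_zero _ hA0)
      apply mul_left_cancel₀ hmm
      linear_combination hR2
    have hR3 : (3600 : ℝ) * lam ^ 6 * U ^ 5 * (a t) ^ 2 + (-25600 : ℝ) * lam ^ 7 * U ^ 4 * (a t) ^ 2 + (-25600 : ℝ) * lam ^ 8 * U ^ 3 * (a t) ^ 2 = 0 := by linear_combination ((9 : ℝ) * lam ^ 4 * U ^ 2 * (a t) ^ 2 + (96 : ℝ) * lam ^ 5 * U * (a t) ^ 2 + (256 : ℝ) * lam ^ 6 * (a t) ^ 2) * hR1s + ((-12 : ℝ) * lam ^ 3 * U * (a t) ^ 3 * (deriv κ t) + (-9 : ℝ) * lam ^ 3 * U ^ 3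 * (a t) ^ 2 + (-64 : ℝ) * lam ^ 4 * (a t) ^ 3 * (deriv κ t) + (304 : ℝ) * lam ^ 4 * U ^ 2 * (a t) ^ 2 + (-256 : ℝ) * lam ^ 5 * U * (a t) ^ 2) * hR2s
    have hR3s : (9 : ℝ) * lam ^ 6 * U ^ 2 + (-64 : ℝ) * lam ^ 7 * U + (-64 : ℝ) * lam ^ 8 = 0 := by
      have hmm : (400 : ℝ) * U ^ 3 * (a t) ^ 2 ≠ 0 :=
        mul_ne_zero (mul_ne_zero (by norm_num) (pow_ne_zero _ hu')) (pow_ne_zero _ hA0)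
      apply mul_left_cancel₀ hmm
      linear_combination hR3
    by_cases hL : lam = 0
    · rw [hL]; ring
    · have hTz : lam ^ 6 * ((9 * U + 8 * lam) * (U - 8 * lam)) = 0 := by
        linear_combination hR3s
      rcases mul_eq_zero.1 hTz with h | h
      · exact absurd h (pow_ne_zero _ hL)
      · linear_combination lam * h - ((9 : ℝ) * lam * (κ t - lam) + (9 : ℝ) * lam * U + (-64 : ℝ) * lam ^ 2) * hU
end

section
/- Let I ⊆ ℝ be an open interval and let ρ : I → ℝ be a smooth function with ρ(x) > 0, ρ'(x) ≠ 0 and ρ'(x)² − ρ''(x)ρ(x) ≠ 0 for all x ∈ I. Define a = −ρ'/ρ², κ = (ρ'² − ρ''ρ)/ρ⁴, and the frame derivatives κ₁ = κ'/ρ, κ₁₁ = κ₁'/ρ, κ₁₁₁ = κ₁₁'/ρ, κ₁₁₁₁ = κ₁₁₁'/ρ. Then the following two conditions are equivalent on I: (a) the three equations 10κ³κ₁₁₁₁ − 70κ²κ₁₁₁κ₁ − 49κ²κ₁₁² + 280κκ₁²κ₁₁ + 16κ⁴κ₁₁ − 20κ³κ₁² − 175κ₁⁴ + 9κ⁶ =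 0, −10κ³aκ₁₁₁ + (154/3)κ²aκ₁₁κ₁ − 20κ³a²κ₁₁ − 4κ⁴κ₁₁ − (140/3)κaκ₁³ + (5/3)κ²(21a²+4κ)κ₁² − (4/3)κ³(15a²+12κ)aκ₁ + 3κ⁶ = 0, and 30κ³a²κ₁₁ − 49κ²a²κ₁² + 2κ³(15a²−3κ)aκ₁ + 9κ⁶ = 0 hold identically on I; (b) ρ satisfies ρ''' ρ' ρ² − 3 (ρ'')² ρ² + ρ'' (ρ')² ρ + (ρ')⁴ = 0 identically on I. -/
/-- The structure function `a = -ρ'/ρ²` of the frame adapted to the Killing vector. -/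
noncomputable def aF (ρ : ℝ → ℝ) : ℝ → ℝ := fun x => -(deriv ρ x) / (ρ x) ^ 2

/-- The Gaussian curvature `κ = (ρ'² - ρ''ρ)/ρ⁴` of the metric `ρ(x)²(dx² + dφ²)`. -/
noncomputable def kF (ρ : ℝ → ℝ) : ℝ → ℝ :=
  fun x => ((deriv ρ x) ^ 2 - deriv (deriv ρ) x * ρ x) / (ρ x) ^ 4

/-- The frame derivative `κ₁ = κ'/ρ`. -/
noncomputable def k1F (ρ : ℝ → ℝ) : ℝ → ℝ := fun x => deriv (kF ρ) x / ρ x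

/-- The frame derivative `κ₁₁ = κ₁'/ρ`. -/
noncomputable def k2F (ρ : ℝ → ℝ) : ℝ → ℝ := fun x => deriv (k1F ρ) x / ρ x

/-- The frame derivative `κ₁₁₁ = κ₁₁'/ρ`. -/
noncomputable def k3F (ρ : ℝ → ℝ) : ℝ → ℝ := fun x => deriv (k2F ρ) x / ρ x

/-- The frame derivative `κ₁₁₁₁ = κ₁₁₁'/ρ`. -/
noncomputable def k4F (ρ : ℝ → ℝ) : ℝ → ℝ := fun x => deriv (k3F ρ) x / ρ x

theorem stmt_14 (I : Set ℝ) (hIopen : IsOpen I) (hIconv : Convex ℝ I)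
    (ρ : ℝ → ℝ) (hρ : ContDiffOn ℝ (⊤ : ℕ∞) ρ I)
    (hpos : ∀ x ∈ I, 0 < ρ x)
    (hρ' : ∀ x ∈ I, deriv ρ x ≠ 0)
    (hκ : ∀ x ∈ I, (deriv ρ x) ^ 2 - deriv (deriv ρ) x * ρ x ≠ 0) :
    (∀ x ∈ I,
      (10 * (kF ρ x) ^ 3 * k4F ρ x - 70 * (kF ρ x) ^ 2 * k3F ρ x * k1F ρ x
          - 49 * (kF ρ x) ^ 2 * (k2F ρ x) ^ 2 + 280 * kF ρ x * (k1F ρ x) ^ 2 * k2F ρ x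
          + 16 * (kF ρ x) ^ 4 * k2F ρ x - 20 * (kF ρ x) ^ 3 * (k1F ρ x) ^ 2
          - 175 * (k1F ρ x) ^ 4 + 9 * (kF ρ x) ^ 6 = 0) ∧
      (-10 * (kF ρ x) ^ 3 * aF ρ x * k3F ρ x
          + (154 / 3) * (kF ρ x) ^ 2 * aF ρ x * k2F ρ x * k1F ρ x
          - 20 * (kF ρ x) ^ 3 * (aF ρ x) ^ 2 * k2F ρ x
          - 4 * (kF ρ x) ^ 4 * k2F ρ x
          - (140 / 3) * kF ρ x * aF ρ x * (k1F ρ x) ^ 3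
          + (5 / 3) * (kF ρ x) ^ 2 * (21 * (aF ρ x) ^ 2 + 4 * kF ρ x) * (k1F ρ x) ^ 2
          - (4 / 3) * (kF ρ x) ^ 3 * (15 * (aF ρ x) ^ 2 + 12 * kF ρ x) * aF ρ x * k1F ρ x
          + 3 * (kF ρ x) ^ 6 = 0) ∧
      (30 * (kF ρ x) ^ 3 * (aF ρ x) ^ 2 * k2F ρ x
          - 49 * (kF ρ x) ^ 2 * (aF ρ x) ^ 2 * (k1F ρ x) ^ 2
          + 2 * (kF ρ x) ^ 3 * (15 * (aF ρ x) ^ 2 - 3 * kF ρ x) * aF ρ x * k1F ρ x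
          + 9 * (kF ρ x) ^ 6 = 0)) ↔
    (∀ x ∈ I,
      deriv (deriv (deriv ρ)) x * deriv ρ x * (ρ x) ^ 2
        - 3 * (deriv (deriv ρ) x) ^ 2 * (ρ x) ^ 2
        + deriv (deriv ρ) x * (deriv ρ x) ^ 2 * ρ x
        + (deriv ρ x) ^ 4 = 0) := by
  have hne : ∀ x ∈ I, ρ x ≠ 0 := fun x hx => (hpos x hx).ne'
  -- smoothness of all the basic functions on I
  have hd1 : ContDiffOn ℝ (⊤ : ℕ∞) (deriv ρ) I := hρ.deriv_of_isOpen hIopen (by simp)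
  have hd2 : ContDiffOn ℝ (⊤ : ℕ∞) (deriv (deriv ρ)) I := hd1.deriv_of_isOpen hIopen (by simp)
  have hkc : ContDiffOn ℝ (⊤ : ℕ∞) (kF ρ) I :=
    ((hd1.pow 2).sub (hd2.mul hρ)).div (hρ.pow 4) (fun x hx => pow_ne_zero _ (hne x hx))
  have step : ∀ f : ℝ → ℝ, ContDiffOn ℝ (⊤ : ℕ∞) f I →
      ContDiffOn ℝ (⊤ : ℕ∞) (fun x => deriv f x / ρ x) I := fun f hf =>
    (hf.deriv_of_isOpen hIopen (by simp)).div hρ hne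
  have hk1c : ContDiffOn ℝ (⊤ : ℕ∞) (k1F ρ) I := step _ hkc
  have hk2c : ContDiffOn ℝ (⊤ : ℕ∞) (k2F ρ) I := step _ hk1c
  have hk3c : ContDiffOn ℝ (⊤ : ℕ∞) (k3F ρ) I := step _ hk2c
  have hac : ContDiffOn ℝ (⊤ : ℕ∞) (aF ρ) I :=
    (hd1.neg).div (hρ.pow 2) (fun x hx => pow_ne_zero _ (hne x hx))
  -- basic HasDerivAt facts
  have hda : ∀ {f : ℝ → ℝ}, ContDiffOn ℝ (⊤ : ℕ∞) f I → ∀ x ∈ I, HasDerivAt f (deriv f x) x := by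
    intro f hf x hx
    exact ((hf.differentiableOn (by simp)).differentiableAt (hIopen.mem_nhds hx)).hasDerivAt
  have hstepD : ∀ (f : ℝ → ℝ), ContDiffOn ℝ (⊤ : ℕ∞) f I → ∀ x ∈ I,
      HasDerivAt f (ρ x * (deriv f x / ρ x)) x := by
    intro f hf x hx
    have h := hda hf x hx
    have he : ρ x * (deriv f x / ρ x) = deriv f x := by
      rw [mul_comm]
      exact div_mul_cancel₀ _ (hne x hx)
    rw [he]; exact h
  have hder_k : ∀ x ∈ I, HasDerivAt (kF ρ) (ρ x * k1F ρ x) x := fun x hx => hstepD (kF ρ) hkc x hx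
  have hder_k1 : ∀ x ∈ I, HasDerivAt (k1F ρ) (ρ x * k2F ρ x) x := fun x hx => hstepD _ hk1c x hx
  have hder_k2 : ∀ x ∈ I, HasDerivAt (k2F ρ) (ρ x * k3F ρ x) x := fun x hx => hstepD _ hk2c x hx
  have hder_k3 : ∀ x ∈ I, HasDerivAt (k3F ρ) (ρ x * k4F ρ x) x := fun x hx => hstepD _ hk3c x hx
  have hder_a : ∀ x ∈ I, HasDerivAt (aF ρ) (ρ x * ((aF ρ x) ^ 2 + kF ρ x)) x := by
    intro x hx
    have Kρ := hda hρ x hx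
    have Kd1 := hda hd1 x hx
    have h : HasDerivAt (aF ρ) ((-(deriv (deriv ρ) x) * (ρ x) ^ 2 -
        -(deriv ρ x) * ((2 : ℕ) * ρ x ^ (2 - 1) * deriv ρ x)) / ((ρ x) ^ 2) ^ 2) x :=
      (Kd1.neg).div (Kρ.pow 2) (pow_ne_zero 2 (hne x hx))
    have he : (-(deriv (deriv ρ) x) * (ρ x) ^ 2 -
        -(deriv ρ x) * ((2 : ℕ) * ρ x ^ (2 - 1) * deriv ρ x)) / ((ρ x) ^ 2) ^ 2
        = ρ x * ((aF ρ x) ^ 2 + kF ρ x) := by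
      simp only [aF, kF]
      field_simp [hne x hx]
      ring
    rw [← he]; exact h
  -- the ODE expressed through the frame quantities: E = ρ⁸ (a κ₁ - 3 κ²)
  have hW : ∀ x ∈ I,
      deriv (deriv (deriv ρ)) x * deriv ρ x * (ρ x) ^ 2
        - 3 * (deriv (deriv ρ) x) ^ 2 * (ρ x) ^ 2
        + deriv (deriv ρ) x * (deriv ρ x) ^ 2 * ρ x
        + (deriv ρ x) ^ 4
      = (ρ x) ^ 8 * (aF ρ x * k1F ρ x - 3 * (kF ρ x) ^ 2) := by
    intro x hx
    have Kρ := hda hρ x hx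
    have Kd1 := hda hd1 x hx
    have Kd2 := hda hd2 x hx
    have hkd : HasDerivAt (kF ρ)
        ((((2 : ℕ) * deriv ρ x ^ (2 - 1) * deriv (deriv ρ) x -
            (deriv (deriv (deriv ρ)) x * ρ x + deriv (deriv ρ) x * deriv ρ x)) * (ρ x) ^ 4 -
          ((deriv ρ x) ^ 2 - deriv (deriv ρ) x * ρ x) * ((4 : ℕ) * ρ x ^ (4 - 1) * deriv ρ x)) /
            ((ρ x) ^ 4) ^ 2) x :=
      ((Kd1.pow 2).sub (Kd2.mul Kρ)).div (Kρ.pow 4) (pow_ne_zero 4 (hne x hx))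
    have hk1x : k1F ρ x = deriv (kF ρ) x / ρ x := rfl
    rw [hk1x, hkd.deriv]
    simp only [aF, kF]
    push_cast
    field_simp [hne x hx]
    ring
  constructor
  · -- equations ⇒ ODE
    intro h x hx
    have hA0 : aF ρ x ≠ 0 := by
      simp only [aF]
      exact div_ne_zero (neg_ne_zero.mpr (hρ' x hx)) (pow_ne_zero _ (hne x hx))
    have hK0 : kF ρ x ≠ 0 := by
      simp only [kF]
      exact div_ne_zero (hκ x hx) (pow_ne_zero _ (hne x hx))
    have Ka := hder_a x hx
    have Kk := hder_k x hx
    have Kk1 := hder_k1 x hx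
    have Kk2 := hder_k2 x hx
    -- derivative of the third equation along I vanishes
    have derivzero : ∀ (f : ℝ → ℝ), (∀ y ∈ I, f y = 0) → deriv f x = 0 := by
      intro f hf
      have hev : f =ᶠ[nhds x] (fun _ => 0) :=
        Filter.eventuallyEq_of_mem (hIopen.mem_nhds hx) (fun y hy => hf y hy)
      rw [hev.deriv_eq]
      exact deriv_const x 0
    have hd3 : HasDerivAt (fun y => 30 * (kF ρ y) ^ 3 * (aF ρ y) ^ 2 * k2F ρ y
          - 49 * (kF ρ y) ^ 2 * (aF ρ y) ^ 2 * (k1F ρ y) ^ 2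
          + 2 * (kF ρ y) ^ 3 * (15 * (aF ρ y) ^ 2 - 3 * kF ρ y) * aF ρ y * k1F ρ y
          + 9 * (kF ρ y) ^ 6) _ x :=
      (((((Kk.pow 3).const_mul 30).mul (Ka.pow 2)).mul Kk2).sub
        ((((Kk.pow 2).const_mul 49).mul (Ka.pow 2)).mul (Kk1.pow 2))).add
        (((((Kk.pow 3).const_mul 2).mul
          (((Ka.pow 2).const_mul 15).sub (Kk.const_mul 3))).mul Ka).mul Kk1) |>.add
        ((Kk.pow 6).const_mul 9)
    have h1 := hd3.deriv
    rw [derivzero _ (fun y hy => (h y hy).2.2)] at h1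
    push_cast at h1
    simp only [Pi.pow_apply, Pi.mul_apply, Pi.sub_apply, Pi.add_apply] at h1
    have hD0 : ρ x * (48*(kF ρ x)^5*(k1F ρ x) + (-122)*(aF ρ x)*(kF ρ x)^3*(k1F ρ x)^2 + 54*(aF ρ x)*(kF ρ x)^4*(k2F ρ x) + (-98)*(aF ρ x)^2*(kF ρ x)*(k1F ρ x)^3 + (-8)*(aF ρ x)^2*(kF ρ x)^2*(k1F ρ x)*(k2F ρ x) + 30*(aF ρ x)^2*(kF ρ x)^3*(k3F ρ x) + 84*(aF ρ x)^2*(kF ρ x)^4*(k1F ρ x) + (-8)*(aF ρ x)^3*(kF ρ x)^2*(k1F ρ x)^2 + 90*(aF ρ x)^3*(kF ρ x)^3*(k2F ρ x) + 90*(aF ρ x)^4*(kF ρ x)^3*(k1F ρ x)) = 0 := by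
      linear_combination -h1
    have hD0' : (48*(kF ρ x)^5*(k1F ρ x) + (-122)*(aF ρ x)*(kF ρ x)^3*(k1F ρ x)^2 + 54*(aF ρ x)*(kF ρ x)^4*(k2F ρ x) + (-98)*(aF ρ x)^2*(kF ρ x)*(k1F ρ x)^3 + (-8)*(aF ρ x)^2*(kF ρ x)^2*(k1F ρ x)*(k2F ρ x) + 30*(aF ρ x)^2*(kF ρ x)^3*(k3F ρ x) + 84*(aF ρ x)^2*(kF ρ x)^4*(k1F ρ x) + (-8)*(aF ρ x)^3*(kF ρ x)^2*(k1F ρ x)^2 + 90*(aF ρ x)^3*(kF ρ x)^3*(k2F ρ x) + 90*(aF ρ x)^4*(kF ρ x)^3*(k1F ρ x)) = 0 :=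
      (mul_eq_zero.mp hD0).resolve_left (hne x hx)
    have e2 := (h x hx).2.1
    have e3 := (h x hx).2.2
    have hkey : 4200 * (aF ρ x)^4 * (kF ρ x)^10 * (aF ρ x * k1F ρ x - 3 * (kF ρ x)^2)^3 = 0 := by
      linear_combination ((-12600)*(aF ρ x)^4*(kF ρ x)^10 + (-43800)*(aF ρ x)^5*(kF ρ x)^8*(k1F ρ x) + (-9000)*(aF ρ x)^6*(kF ρ x)^9) * e3 + (9000*(aF ρ x)^5*(kF ρ x)^9) * hD0' + (27000*(aF ρ x)^6*(kF ρ x)^9) * e2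
    have hfac : (4200 : ℝ) * (aF ρ x)^4 * (kF ρ x)^10 ≠ 0 :=
      mul_ne_zero (mul_ne_zero (by norm_num) (pow_ne_zero _ hA0)) (pow_ne_zero _ hK0)
    have hw3 : (aF ρ x * k1F ρ x - 3 * (kF ρ x)^2)^3 = 0 := by
      rcases mul_eq_zero.mp hkey with h' | h'
      · exact absurd h' hfac
      · exact h'
    have hw : aF ρ x * k1F ρ x - 3 * (kF ρ x)^2 = 0 :=
      pow_eq_zero_iff (by norm_num) |>.mp hw3
    rw [hW x hx, hw, mul_zero]
  · -- ODE ⇒ equations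
    intro hE x hx
    have derivzero : ∀ (f : ℝ → ℝ), (∀ y ∈ I, f y = 0) → ∀ y ∈ I, deriv f y = 0 := by
      intro f hf y hy
      have hev : f =ᶠ[nhds y] (fun _ => 0) :=
        Filter.eventuallyEq_of_mem (hIopen.mem_nhds hy) (fun z hz => hf z hz)
      rw [hev.deriv_eq]
      exact deriv_const y 0
    have hw0 : ∀ y ∈ I, aF ρ y * k1F ρ y - 3 * (kF ρ y) ^ 2 = 0 := by
      intro y hy
      have h0 := hE y hy
      rw [hW y hy] at h0
      exact (mul_eq_zero.mp h0).resolve_left (pow_ne_zero 8 (hne y hy))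
    have hw1 : ∀ y ∈ I, -5 * (kF ρ y * k1F ρ y) + aF ρ y * k2F ρ y + (aF ρ y)^2 * k1F ρ y = 0 := by
      intro y hy
      have Ka := hder_a y hy
      have Kk := hder_k y hy
      have Kk1 := hder_k1 y hy
      have hd : HasDerivAt (fun z => aF ρ z * k1F ρ z - 3 * (kF ρ z) ^ 2) _ y :=
        (Ka.mul Kk1).sub ((Kk.pow 2).const_mul 3)
      have h1 := hd.deriv
      rw [derivzero _ hw0 y hy] at h1
      push_cast at h1
      have h2 : ρ y * (-5 * (kF ρ y * k1F ρ y) + aF ρ y * k2F ρ y + (aF ρ y)^2 * k1F ρ y) = 0 := by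
        linear_combination -h1
      exact (mul_eq_zero.mp h2).resolve_left (hne y hy)
    have hw2 : ∀ y ∈ I, -5 * (k1F ρ y)^2 - 4 * (kF ρ y * k2F ρ y) + aF ρ y * k3F ρ y
        + 2 * (aF ρ y * (kF ρ y * k1F ρ y)) + 2 * ((aF ρ y)^2 * k2F ρ y)
        + 2 * ((aF ρ y)^3 * k1F ρ y) = 0 := by
      intro y hy
      have Ka := hder_a y hy
      have Kk := hder_k y hy
      have Kk1 := hder_k1 y hy
      have Kk2 := hder_k2 y hy
      have hd : HasDerivAt (fun z => -5 * (kF ρ z * k1F ρ z) + aF ρ z * k2F ρ z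
          + (aF ρ z)^2 * k1F ρ z) _ y :=
        (((Kk.mul Kk1).const_mul (-5)).add (Ka.mul Kk2)).add ((Ka.pow 2).mul Kk1)
      have h1 := hd.deriv
      rw [derivzero _ hw1 y hy] at h1
      push_cast at h1
      simp only [Pi.pow_apply, Pi.mul_apply, Pi.sub_apply, Pi.add_apply] at h1
      have h2 : ρ y * (-5 * (k1F ρ y)^2 - 4 * (kF ρ y * k2F ρ y) + aF ρ y * k3F ρ y
          + 2 * (aF ρ y * (kF ρ y * k1F ρ y)) + 2 * ((aF ρ y)^2 * k2F ρ y)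
          + 2 * ((aF ρ y)^3 * k1F ρ y)) = 0 := by
        linear_combination -h1
      exact (mul_eq_zero.mp h2).resolve_left (hne y hy)
    have hw3 : -14 * (k1F ρ x * k2F ρ x) - 3 * (kF ρ x * k3F ρ x) + 2 * ((kF ρ x)^2 * k1F ρ x)
        + aF ρ x * k4F ρ x + 2 * (aF ρ x * (k1F ρ x)^2) + 6 * (aF ρ x * (kF ρ x * k2F ρ x))
        + 3 * ((aF ρ x)^2 * k3F ρ x) + 8 * ((aF ρ x)^2 * (kF ρ x * k1F ρ x))
        + 6 * ((aF ρ x)^3 * k2F ρ x) + 6 * ((aF ρ x)^4 * k1F ρ x) = 0 := by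
      have Ka := hder_a x hx
      have Kk := hder_k x hx
      have Kk1 := hder_k1 x hx
      have Kk2 := hder_k2 x hx
      have Kk3 := hder_k3 x hx
      have hd : HasDerivAt (fun z => -5 * (k1F ρ z)^2 - 4 * (kF ρ z * k2F ρ z) + aF ρ z * k3F ρ z
          + 2 * (aF ρ z * (kF ρ z * k1F ρ z)) + 2 * ((aF ρ z)^2 * k2F ρ z)
          + 2 * ((aF ρ z)^3 * k1F ρ z)) _ x :=
        (((((((Kk1.pow 2).const_mul (-5)).sub ((Kk.mul Kk2).const_mul 4)).add
          (Ka.mul Kk3)).add ((Ka.mul (Kk.mul Kk1)).const_mul 2)).add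
          (((Ka.pow 2).mul Kk2).const_mul 2)).add (((Ka.pow 3).mul Kk1).const_mul 2))
      have h1 := hd.deriv
      rw [derivzero _ hw2 x hx] at h1
      push_cast at h1
      simp only [Pi.pow_apply, Pi.mul_apply, Pi.sub_apply, Pi.add_apply] at h1
      have h2 : ρ x * (-14 * (k1F ρ x * k2F ρ x) - 3 * (kF ρ x * k3F ρ x)
          + 2 * ((kF ρ x)^2 * k1F ρ x) + aF ρ x * k4F ρ x + 2 * (aF ρ x * (k1F ρ x)^2)
          + 6 * (aF ρ x * (kF ρ x * k2F ρ x)) + 3 * ((aF ρ x)^2 * k3F ρ x)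
          + 8 * ((aF ρ x)^2 * (kF ρ x * k1F ρ x)) + 6 * ((aF ρ x)^3 * k2F ρ x)
          + 6 * ((aF ρ x)^4 * k1F ρ x)) = 0 := by
        linear_combination -h1
      exact (mul_eq_zero.mp h2).resolve_left (hne x hx)
    have hA0 : aF ρ x ≠ 0 := by
      simp only [aF]
      exact div_ne_zero (neg_ne_zero.mpr (hρ' x hx)) (pow_ne_zero _ (hne x hx))
    have h0 := hw0 x hx
    have h1 := hw1 x hx
    have h2 := hw2 x hx
    refine ⟨?_, ?_, ?_⟩
    · have hkey : (aF ρ x)^8 * (10 * (kF ρ x) ^ 3 * k4F ρ x - 70 * (kF ρ x) ^ 2 * k3F ρ x * k1F ρ x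
          - 49 * (kF ρ x) ^ 2 * (k2F ρ x) ^ 2 + 280 * kF ρ x * (k1F ρ x) ^ 2 * k2F ρ x
          + 16 * (kF ρ x) ^ 4 * k2F ρ x - 20 * (kF ρ x) ^ 3 * (k1F ρ x) ^ 2
          - 175 * (k1F ρ x) ^ 4 + 9 * (kF ρ x) ^ 6) = 0 := by
        linear_combination ((-200)*(aF ρ x)^5*(kF ρ x)^4*(k1F ρ x) + 525*(aF ρ x)^6*(kF ρ x)^2*(k1F ρ x)^2 + (-175)*(aF ρ x)^7*(k1F ρ x)^3 + 440*(aF ρ x)^7*(kF ρ x)^3*(k1F ρ x) + (-280)*(aF ρ x)^8*(kF ρ x)*(k1F ρ x)^2 + (-3)*(aF ρ x)^8*(kF ρ x)^4 + (-49)*(aF ρ x)^9*(kF ρ x)^2*(k1F ρ x)) * h0 + (120*(aF ρ x)^5*(kF ρ x)^5 + (-385)*(aF ρ x)^6*(kF ρ x)^3*(k1F ρ x) + 280*(aF ρ x)^7*(kF ρ x)*(k1F ρ x)^2 + (-49)*(aF ρ x)^7*(kF ρ x)^2*(k2F ρ x) + (-224)*(aF ρ x)^7*(kF ρ x)^4 +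 189*(aF ρ x)^8*(kF ρ x)^2*(k1F ρ x)) * h1 + (30*(aF ρ x)^6*(kF ρ x)^4 + (-70)*(aF ρ x)^7*(kF ρ x)^2*(k1F ρ x) + (-30)*(aF ρ x)^8*(kF ρ x)^3) * h2 + (10*(aF ρ x)^7*(kF ρ x)^3) * hw3
      exact (mul_eq_zero.mp hkey).resolve_left (pow_ne_zero _ hA0)
    · have hkey : (aF ρ x)^5 * (-10 * (kF ρ x) ^ 3 * aF ρ x * k3F ρ x
          + (154 / 3) * (kF ρ x) ^ 2 * aF ρ x * k2F ρ x * k1F ρ x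
          - 20 * (kF ρ x) ^ 3 * (aF ρ x) ^ 2 * k2F ρ x
          - 4 * (kF ρ x) ^ 4 * k2F ρ x
          - (140 / 3) * kF ρ x * aF ρ x * (k1F ρ x) ^ 3
          + (5 / 3) * (kF ρ x) ^ 2 * (21 * (aF ρ x) ^ 2 + 4 * kF ρ x) * (k1F ρ x) ^ 2
          - (4 / 3) * (kF ρ x) ^ 3 * (15 * (aF ρ x) ^ 2 + 12 * kF ρ x) * aF ρ x * k1F ρ x
          + 3 * (kF ρ x) ^ 6) = 0 := by
        linear_combination ((220/3)*(aF ρ x)^4*(kF ρ x)^3*(k1F ρ x) + (-140/3)*(aF ρ x)^5*(kF ρ x)*(k1F ρ x)^2 + (-1)*(aF ρ x)^5*(kF ρ x)^4 + (-49/3)*(aF ρ x)^6*(kF ρ x)^2*(k1F ρ x)) * h0 + ((-44)*(aF ρ x)^4*(kF ρ x)^4 + (154/3)*(aF ρ x)^5*(kF ρ x)^2*(k1F ρ x)) * h1 + ((-10)*(aF ρ x)^5*(kF ρ x)^3) * h2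
      exact (mul_eq_zero.mp hkey).resolve_left (pow_ne_zero _ hA0)
    · have hkey : (aF ρ x)^3 * (30 * (kF ρ x) ^ 3 * (aF ρ x) ^ 2 * k2F ρ x
          - 49 * (kF ρ x) ^ 2 * (aF ρ x) ^ 2 * (k1F ρ x) ^ 2
          + 2 * (kF ρ x) ^ 3 * (15 * (aF ρ x) ^ 2 - 3 * kF ρ x) * aF ρ x * k1F ρ x
          + 9 * (kF ρ x) ^ 6) = 0 := by
        linear_combination ((-3)*(aF ρ x)^3*(kF ρ x)^4 + (-49)*(aF ρ x)^4*(kF ρ x)^2*(k1F ρ x)) * h0 + (30*(aF ρ x)^4*(kF ρ x)^3) * h1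
      exact (mul_eq_zero.mp hkey).resolve_left (pow_ne_zero _ hA0)
end

section
/- Define F : ℝ² → ℝ³ by F(ρ, φ) = (ρ cos φ, ρ sin φ, (1/3)(ρ² + 2)^{3/2}). Then F is smooth, and for every (ρ, φ) ∈ ℝ² with ρ ≥ 0 its partial derivatives satisfy, with respect to the Euclidean inner product ⟨·,·⟩ on ℝ³: ⟨∂F/∂ρ, ∂F/∂ρ⟩ = (ρ² + 1)², ⟨∂F/∂ρ, ∂F/∂φ⟩ = 0, and ⟨∂F/∂φ, ∂F/∂φ⟩ = ρ² (so F is an isometric immersion of the metric g₁₊ = (ρ²+1)² dρ² + ρ² dφ² into Euclidean ℝ³ wherever ρ > 0). Moreover every point (X, Y, Z) in the image of F satisfies the algebraic equation (X² + Y² + 2)³ − 9Z² = 0. -/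
/-- The Euclidean inner product on ℝ³. -/
def dot3 (u v : Fin 3 → ℝ) : ℝ := u 0 * v 0 + u 1 * v 1 + u 2 * v 2

/-- The embedding `F(ρ,φ) = (ρ cos φ, ρ sin φ, (1/3)(ρ²+2)^{3/2})` of the surface
`g₁₊ = (ρ²+1)² dρ² + ρ² dφ²` into ℝ³. -/
noncomputable def Fplus (ρ φ : ℝ) : Fin 3 → ℝ :=
  ![ρ * Real.cos φ, ρ * Real.sin φ, (1 / 3) * (ρ ^ 2 + 2) ^ ((3 : ℝ) / 2)]

lemma sq_rpow_half (x : ℝ) (hx : 0 ≤ x) : (x ^ ((1 : ℝ) / 2)) ^ 2 = x := by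
  rw [← Real.rpow_natCast (x ^ ((1 : ℝ) / 2)) 2, ← Real.rpow_mul hx]
  norm_num

lemma sq_rpow_three_half (x : ℝ) (hx : 0 ≤ x) : (x ^ ((3 : ℝ) / 2)) ^ 2 = x ^ 3 := by
  rw [← Real.rpow_natCast (x ^ ((3 : ℝ) / 2)) 2, ← Real.rpow_mul hx,
    show ((3 : ℝ) / 2 * (2 : ℕ)) = ((3 : ℕ) : ℝ) by norm_num, Real.rpow_natCast]

lemma derivR (ρ φ : ℝ) :
    deriv (fun r => Fplus r φ) ρ
      = ![Real.cos φ, Real.sin φ, ρ * (ρ ^ 2 + 2) ^ ((1 : ℝ) / 2)] := by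
  have h2 : HasDerivAt (fun r : ℝ => r ^ 2 + 2) (2 * ρ) ρ := by
    simpa using ((hasDerivAt_pow 2 ρ).add_const 2)
  have h3 := h2.rpow_const (p := (3 : ℝ) / 2) (Or.inl (by positivity))
  have h3' : HasDerivAt (fun r : ℝ => (1 / 3 : ℝ) * (r ^ 2 + 2) ^ ((3 : ℝ) / 2))
      (ρ * (ρ ^ 2 + 2) ^ ((1 : ℝ) / 2)) ρ := by
    have h4 := h3.const_mul (1 / 3 : ℝ)
    refine h4.congr_deriv ?_
    rw [show ((3 : ℝ) / 2 - 1) = 1 / 2 by norm_num]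
    ring
  have h : HasDerivAt (fun r => Fplus r φ)
      ![Real.cos φ, Real.sin φ, ρ * (ρ ^ 2 + 2) ^ ((1 : ℝ) / 2)] ρ := by
    rw [hasDerivAt_pi]
    intro i
    fin_cases i
    · simpa [Fplus] using (hasDerivAt_id ρ).mul_const (Real.cos φ)
    · simpa [Fplus] using (hasDerivAt_id ρ).mul_const (Real.sin φ)
    · simpa [Fplus] using h3'
  exact h.deriv

lemma derivP (ρ φ : ℝ) :
    deriv (fun t => Fplus ρ t) φ
      = ![-(ρ * Real.sin φ), ρ * Real.cos φ, 0] := by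
  have h : HasDerivAt (fun t => Fplus ρ t)
      ![-(ρ * Real.sin φ), ρ * Real.cos φ, 0] φ := by
    rw [hasDerivAt_pi]
    intro i
    fin_cases i
    · simpa [Fplus, mul_comm] using (Real.hasDerivAt_cos φ).const_mul ρ
    · simpa [Fplus, mul_comm] using (Real.hasDerivAt_sin φ).const_mul ρ
    · simpa [Fplus] using (hasDerivAt_const φ ((1 / 3 : ℝ) * (ρ ^ 2 + 2) ^ ((3 : ℝ) / 2)))
  exact h.deriv

theorem stmt_15 :
    -- F is smooth on ℝ²
    ContDiff ℝ (⊤ : ℕ∞) (fun p : ℝ × ℝ => Fplus p.1 p.2) ∧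
    -- F is an isometric immersion of g₁₊ = (ρ²+1)² dρ² + ρ² dφ²
    (∀ ρ φ : ℝ, 0 ≤ ρ →
      dot3 (deriv (fun r => Fplus r φ) ρ) (deriv (fun r => Fplus r φ) ρ)
          = (ρ ^ 2 + 1) ^ 2 ∧
      dot3 (deriv (fun r => Fplus r φ) ρ) (deriv (fun t => Fplus ρ t) φ) = 0 ∧
      dot3 (deriv (fun t => Fplus ρ t) φ) (deriv (fun t => Fplus ρ t) φ) = ρ ^ 2) ∧
    -- every point (X,Y,Z) in the image of F satisfies (X²+Y²+2)³ - 9Z² = 0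
    (∀ ρ φ : ℝ,
      ((Fplus ρ φ 0) ^ 2 + (Fplus ρ φ 1) ^ 2 + 2) ^ 3 - 9 * (Fplus ρ φ 2) ^ 2 = 0) := by
  refine ⟨?_, ?_, ?_⟩
  · apply contDiff_pi.2
    intro i
    fin_cases i
    · simp only [Fplus, Matrix.cons_val_zero]
      exact contDiff_fst.mul (Real.contDiff_cos.comp contDiff_snd)
    · simp only [Fplus, Matrix.cons_val_one, Matrix.head_cons]
      exact contDiff_fst.mul (Real.contDiff_sin.comp contDiff_snd)
    · have hb : ContDiff ℝ (⊤ : ℕ∞) (fun p : ℝ × ℝ => p.1 ^ 2 + 2) :=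
        (contDiff_fst.pow 2).add contDiff_const
      have : ContDiff ℝ (⊤ : ℕ∞) (fun p : ℝ × ℝ => (p.1 ^ 2 + 2) ^ ((3 : ℝ) / 2)) := by
        rw [contDiff_iff_contDiffAt]
        intro p
        exact (Real.contDiffAt_rpow_const_of_ne (by positivity)).comp p hb.contDiffAt
      simp only [Fplus, Matrix.cons_val_two, Matrix.tail_cons, Matrix.head_cons]
      exact contDiff_const.mul this
  · intro ρ φ hρ
    rw [derivR, derivP]
    have h1 := sq_rpow_half (ρ ^ 2 + 2) (by positivity)
    refine ⟨?_, ?_, ?_⟩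
    · simp only [dot3, Matrix.cons_val_zero, Matrix.cons_val_one, Matrix.head_cons,
        Matrix.cons_val_two, Matrix.tail_cons]
      nlinarith [Real.sin_sq_add_cos_sq φ]
    · simp only [dot3, Matrix.cons_val_zero, Matrix.cons_val_one, Matrix.head_cons,
        Matrix.cons_val_two, Matrix.tail_cons]
      ring
    · simp only [dot3, Matrix.cons_val_zero, Matrix.cons_val_one, Matrix.head_cons,
        Matrix.cons_val_two, Matrix.tail_cons]
      nlinarith [Real.sin_sq_add_cos_sq φ]
  · intro ρ φ
    have h := sq_rpow_three_half (ρ ^ 2 + 2) (by positivity)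
    have hc : (ρ * Real.cos φ) ^ 2 + (ρ * Real.sin φ) ^ 2 = ρ ^ 2 := by
      have := Real.sin_sq_add_cos_sq φ; nlinarith
    simp only [Fplus, Matrix.cons_val_zero, Matrix.cons_val_one, Matrix.head_cons,
      Matrix.cons_val_two, Matrix.tail_cons]
    calc ((ρ * Real.cos φ) ^ 2 + (ρ * Real.sin φ) ^ 2 + 2) ^ 3
          - 9 * (1 / 3 * (ρ ^ 2 + 2) ^ ((3 : ℝ) / 2)) ^ 2
        = (ρ ^ 2 + 2) ^ 3 - ((ρ ^ 2 + 2) ^ ((3 : ℝ) / 2)) ^ 2 := by rw [hc]; ring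
      _ = 0 := by rw [h]; ring
end
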